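/- arXiv:2507.00250 — 11 statements merged into one kernel-verified Lean document; each statement's English description precedes it below -/
import Mathlib

section
/- Let Ω ⊆ ℝ² be a set satisfying property (i). Then Ω equals its double antipolar: Ω^{◇◇} = Ω. -/
open scoped Pointwise

/-- The antipolar of a set `Ω ⊆ ℝ²`:
`Ω^◇ = {(p,q) : p·x − q·y ≥ 1 for all (x,y) ∈ Ω}`. -/
def antipolar (Ω : Set (ℝ × ℝ)) : Set (ℝ × ℝ) :=
  {pq | ∀ xy ∈ Ω, 1 ≤ pq.1 * xy.1 - pq.2 * xy.2}

/-- Property (i): `Ω` is nonempty, convex, closed, does not contain the origin,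
and has the ray property `λΩ ⊆ Ω` for every `λ > 1`. -/
def PropI (Ω : Set (ℝ × ℝ)) : Prop :=
  Ω.Nonempty ∧ Convex ℝ Ω ∧ IsClosed Ω ∧ (0 : ℝ × ℝ) ∉ Ω ∧
    ∀ c : ℝ, 1 < c → c • Ω ⊆ Ω

lemma eval_pair (f : (ℝ × ℝ) →L[ℝ] ℝ) (x y : ℝ) :
    f (x, y) = x * f (1, 0) + y * f (0, 1) := by
  have h : (x, y) = x • ((1 : ℝ), (0 : ℝ)) + y • ((0 : ℝ), (1 : ℝ)) := by
    simp [Prod.ext_iff]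
  rw [h, map_add, map_smul, map_smul, smul_eq_mul, smul_eq_mul]

lemma sep (Ω : Set (ℝ × ℝ)) (hΩ : PropI Ω) (z : ℝ × ℝ) (hz : z ∉ Ω) :
    ∃ (h : (ℝ × ℝ) →L[ℝ] ℝ) (d : ℝ), 0 < d ∧ (∀ ω ∈ Ω, d ≤ h ω) ∧ h z < d := by
  obtain ⟨-, hconv, hclosed, h0, hray⟩ := hΩ
  obtain ⟨f, u, hfz, hfΩ⟩ := geometric_hahn_banach_point_closed hconv hclosed hz
  obtain ⟨g, d, hg0, hgΩ⟩ := geometric_hahn_banach_point_closed hconv hclosed h0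
  have hd : 0 < d := by simpa using hg0
  rcases le_or_gt u 0 with hu | hu
  · -- f ≥ 0 on Ω by the ray property
    have hfnn : ∀ ω ∈ Ω, 0 ≤ f ω := by
      intro ω hω
      by_contra hneg
      push_neg at hneg
      set l : ℝ := max 2 ((u - 1) / f ω) with hl
      have hl1 : (1 : ℝ) < l := lt_of_lt_of_le one_lt_two (le_max_left _ _)
      have hmem : l • ω ∈ Ω := hray l hl1 (Set.smul_mem_smul_set hω)
      have := hfΩ _ hmem
      rw [map_smul, smul_eq_mul] at this
      have hge : (u - 1) / f ω ≤ l := le_max_right _ _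
      have : l * f ω ≤ u - 1 := by
        have := mul_le_mul_of_nonpos_right hge (le_of_lt hneg)
        calc l * f ω ≤ (u - 1) / f ω * f ω := by nlinarith
          _ = u - 1 := by rw [div_mul_cancel₀ _ (ne_of_lt hneg)]
      linarith [hfΩ _ hmem, map_smul f l ω, this]
    have hfz0 : f z < 0 := lt_of_lt_of_le hfz hu
    set t : ℝ := max 1 ((d - g z) / f z + 1) with ht
    have ht0 : (0 : ℝ) < t := lt_of_lt_of_le one_pos (le_max_left _ _)
    refine ⟨g + t • f, d, hd, ?_, ?_⟩
    · intro ω hω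
      have h1 := hgΩ ω hω
      have h2 := hfnn ω hω
      simp only [ContinuousLinearMap.add_apply, ContinuousLinearMap.smul_apply,
        smul_eq_mul]
      nlinarith
    · have hgt : (d - g z) / f z < t := by
        have : (d - g z) / f z + 1 ≤ t := le_max_right _ _
        linarith
      have heq : (d - g z) / f z * f z = d - g z := div_mul_cancel₀ _ (ne_of_lt hfz0)
      simp only [ContinuousLinearMap.add_apply, ContinuousLinearMap.smul_apply,
        smul_eq_mul]
      nlinarith [mul_lt_mul_of_neg_right hgt hfz0]
  · exact ⟨f, u, hu, fun ω hω => le_of_lt (hfΩ ω hω), hfz⟩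

/-- If `Ω ⊆ ℝ²` satisfies property (i), then `Ω^{◇◇} = Ω`. -/
theorem biantipolar (Ω : Set (ℝ × ℝ)) (hΩ : PropI Ω) :
    antipolar (antipolar Ω) = Ω := by
  ext z
  constructor
  · intro hzz
    by_contra hz
    obtain ⟨h, d, hd, hΩd, hzd⟩ := sep Ω hΩ z hz
    set ab : ℝ × ℝ := (h (1, 0) / d, -h (0, 1) / d) with hab
    have hmem : ab ∈ antipolar Ω := by
      intro xy hxy
      have h1 := hΩd xy hxy
      have h2 : h xy = xy.1 * h (1, 0) + xy.2 * h (0, 1) := by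
        rw [← eval_pair h xy.1 xy.2]
      have : ab.1 * xy.1 - ab.2 * xy.2 = h xy / d := by
        rw [h2, hab]; field_simp; try ring
      rw [this, le_div_iff₀ hd]
      linarith
    have := hzz ab hmem
    have h2 : h z = z.1 * h (1, 0) + z.2 * h (0, 1) := by
      rw [← eval_pair h z.1 z.2]
    have hcontr : z.1 * ab.1 - z.2 * ab.2 = h z / d := by
      rw [h2, hab]; field_simp; try ring
    rw [hcontr] at this
    have hdz : d ≤ h z := (one_le_div hd).mp this
    linarith
  · intro hz ab hab
    have := hab z hz
    nlinarith [hab z hz]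
end

section
/- If a nonempty set Ω ⊆ ℝ² is strictly separated from the origin, then its antipolar Ω^◇ satisfies property (i) (it is nonempty, convex, closed, does not contain the origin, and λΩ^◇ ⊆ Ω^◇ for every λ > 1), and moreover Ω^{◇◇} = closure(convexHull(⋃_{λ ≥ 1} λΩ)). -/
/-!
`Ω^◇` is an intersection of closed half-planes `{(p, q) | 1 ≤ p x - q y}`, stable under scaling
by `λ ≥ 1`, and the separating functional gives the point `(A, -B)` of it. The antipolar does not
change when `Ω` is replaced by `K = closure (convexHull (⋃_{λ ≥ 1} λΩ))`, which is closed, convex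
and stable under `λ ≥ 1`. For such `K` a point `z ∉ K` is cut off by a functional `f` with
`f z < u < f` on `K`; `f ≥ 0` on `K` because `K` contains rays, so either `f / u` (when `u > 0`)
or `w₀ + s f` for a fixed `w₀ ∈ K^◇` and large `s` (when `f z < 0`) is a point of `K^◇` pairing
with `z` below `1`. Hence `Ω^◇◇ = K^◇◇ = K`.
-/

open scoped Pointwise

/-- `Ω` is strictly separated from the origin if there are `A, B ∈ ℝ`
with `A·x + B·y ≥ 1` for all `(x,y) ∈ Ω`. -/
def StrictlySeparatedFromOrigin (Ω : Set (ℝ × ℝ)) : Prop :=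
  ∃ A B : ℝ, ∀ xy ∈ Ω, 1 ≤ A * xy.1 + B * xy.2

open Set

section Rays

variable {E : Type*} [AddCommGroup E] [Module ℝ E]

theorem smul_biUnion_smul_subset (Ω : Set E) {c : ℝ} (hc : 1 ≤ c) :
    c • ⋃ c' ∈ Ici (1 : ℝ), c' • Ω ⊆ ⋃ c' ∈ Ici (1 : ℝ), c' • Ω := by
  rw [smul_set_iUnion₂]
  refine iUnion₂_subset fun c' (hc' : 1 ≤ c') => ?_
  rw [smul_smul]
  exact subset_biUnion_of_mem (u := fun c'' => c'' • Ω) (one_le_mul_of_one_le_of_one_le hc hc')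

theorem smul_closure_convexHull_subset [TopologicalSpace E] [ContinuousConstSMul ℝ E]
    {X : Set E} {c : ℝ} (h : c • X ⊆ X) :
    c • closure (convexHull ℝ X) ⊆ closure (convexHull ℝ X) :=
  (smul_closure_subset c _).trans <| closure_mono <| by
    rw [← convexHull_smul]
    exact convexHull_mono h

theorem LinearMap.nonneg_of_lt_of_smul_subset {K : Set E}
    (hK : ∀ c : ℝ, 1 ≤ c → c • K ⊆ K) (f : E →ₗ[ℝ] ℝ) {u : ℝ} (hf : ∀ k ∈ K, u < f k)
    {k : E} (hk : k ∈ K) : 0 ≤ f k := by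
  by_contra! hneg
  have hc : 1 ≤ 1 + |u| / -f k := le_add_of_nonneg_right (div_nonneg (abs_nonneg u) (by linarith))
  have hlt := hf _ (hK _ hc (smul_mem_smul_set hk))
  have hval : f ((1 + |u| / -f k) • k) = f k - |u| := by
    rw [map_smul, smul_eq_mul, add_mul, one_mul, div_mul_eq_mul_div, div_neg, mul_div_assoc,
      div_self hneg.ne, mul_one]
    ring
  linarith [neg_abs_le u]

end Rays

def antipairing : (ℝ × ℝ) →ₗ[ℝ] (ℝ × ℝ) →ₗ[ℝ] ℝ :=
  LinearMap.mk₂ ℝ (fun w v => w.1 * v.1 - w.2 * v.2)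
    (fun _ _ _ => by simp only [Prod.fst_add, Prod.snd_add]; ring)
    (fun _ _ _ => by simp only [Prod.smul_fst, Prod.smul_snd, smul_eq_mul]; ring)
    (fun _ _ _ => by simp only [Prod.fst_add, Prod.snd_add]; ring)
    (fun _ _ _ => by simp only [Prod.smul_fst, Prod.smul_snd, smul_eq_mul]; ring)

@[simp]
theorem antipairing_apply (w v : ℝ × ℝ) : antipairing w v = w.1 * v.1 - w.2 * v.2 := rfl

theorem antipairing_comm (w v : ℝ × ℝ) : antipairing w v = antipairing v w := by
  simp only [antipairing_apply]
  ring

theorem antipairing_surjective : Function.Surjective antipairing :=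
  fun f => ⟨(f (1, 0), -f (0, 1)), by ext <;> simp⟩

theorem isClosed_one_le_antipairing (v : ℝ × ℝ) : IsClosed {w | 1 ≤ antipairing v w} :=
  isClosed_le continuous_const (antipairing v).continuous_of_finiteDimensional

theorem convex_one_le_antipairing (v : ℝ × ℝ) : Convex ℝ {w | 1 ≤ antipairing v w} :=
  convex_halfSpace_ge (antipairing v).isLinear 1

section Antipolar

variable {Ω Ω' : Set (ℝ × ℝ)}

theorem mem_antipolar {w : ℝ × ℝ} : w ∈ antipolar Ω ↔ ∀ v ∈ Ω, 1 ≤ antipairing w v := Iff.rfl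

theorem antipolar_eq_biInter (Ω : Set (ℝ × ℝ)) :
    antipolar Ω = ⋂ v ∈ Ω, {w | 1 ≤ antipairing v w} := by
  ext w
  simp only [mem_antipolar, mem_iInter₂, mem_ofPred_eq, antipairing_comm w]

theorem isClosed_antipolar (Ω : Set (ℝ × ℝ)) : IsClosed (antipolar Ω) :=
  antipolar_eq_biInter Ω ▸ isClosed_biInter fun v _ => isClosed_one_le_antipairing v

theorem convex_antipolar (Ω : Set (ℝ × ℝ)) : Convex ℝ (antipolar Ω) :=
  antipolar_eq_biInter Ω ▸ convex_iInter₂ fun v _ => convex_one_le_antipairing v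

theorem antipolar_anti (h : Ω ⊆ Ω') : antipolar Ω' ⊆ antipolar Ω :=
  fun _ hw v hv => hw v (h hv)

theorem subset_antipolar_antipolar (Ω : Set (ℝ × ℝ)) : Ω ⊆ antipolar (antipolar Ω) :=
  fun v hv => mem_antipolar.2 fun w hw => antipairing_comm v w ▸ mem_antipolar.1 hw v hv

theorem zero_notMem_antipolar (hΩ : Ω.Nonempty) : (0 : ℝ × ℝ) ∉ antipolar Ω := fun h => by
  obtain ⟨v, hv⟩ := hΩ
  exact absurd (mem_antipolar.1 h v hv) (by simp)

theorem smul_antipolar_subset {c : ℝ} (hc : 1 ≤ c) : c • antipolar Ω ⊆ antipolar Ω := by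
  rintro _ ⟨w, hw, rfl⟩
  refine mem_antipolar.2 fun v hv => ?_
  rw [map_smul, LinearMap.smul_apply, smul_eq_mul]
  exact one_le_mul_of_one_le_of_one_le hc (mem_antipolar.1 hw v hv)

theorem StrictlySeparatedFromOrigin.antipolar_nonempty (h : StrictlySeparatedFromOrigin Ω) :
    (antipolar Ω).Nonempty := by
  obtain ⟨A, B, hAB⟩ := h
  exact ⟨(A, -B), mem_antipolar.2 fun v hv => by simpa using hAB v hv⟩

theorem antipolar_biUnion_smul (Ω : Set (ℝ × ℝ)) :
    antipolar (⋃ c ∈ Ici (1 : ℝ), c • Ω) = antipolar Ω := by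
  refine (antipolar_anti ?_).antisymm fun w hw => ?_
  · simpa using subset_biUnion_of_mem (u := fun c : ℝ => c • Ω) (self_mem_Ici (a := (1 : ℝ)))
  · simp only [mem_antipolar, mem_iUnion₂, mem_Ici]
    rintro _ ⟨c, hc, v, hv, rfl⟩
    rw [map_smul, smul_eq_mul]
    exact one_le_mul_of_one_le_of_one_le hc (mem_antipolar.1 hw v hv)

theorem antipolar_closure_convexHull (X : Set (ℝ × ℝ)) :
    antipolar (closure (convexHull ℝ X)) = antipolar X := by
  refine (antipolar_anti ((subset_convexHull ℝ X).trans subset_closure)).antisymm fun w hw => ?_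
  have hX : X ⊆ {v | 1 ≤ antipairing w v} := mem_antipolar.1 hw
  exact mem_antipolar.2 <| closure_minimal
    (convexHull_min hX (convex_one_le_antipairing w)) (isClosed_one_le_antipairing w)

end Antipolar

section Bipolar

variable {K : Set (ℝ × ℝ)} (hconv : Convex ℝ K) (hclosed : IsClosed K)
  (hray : ∀ c : ℝ, 1 ≤ c → c • K ⊆ K) (hne : (antipolar K).Nonempty)
include hconv hclosed hray hne

theorem exists_mem_antipolar_antipairing_lt_one {z : ℝ × ℝ} (hz : z ∉ K) :
    ∃ w ∈ antipolar K, antipairing w z < 1 := by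
  obtain ⟨f, u, hfz, hfK⟩ := geometric_hahn_banach_point_closed hconv hclosed hz
  obtain ⟨d, hd⟩ := antipairing_surjective f.toLinearMap
  have hdv (v : ℝ × ℝ) : antipairing d v = f v := LinearMap.congr_fun hd v
  rcases lt_or_ge 0 u with hu | hu
  · refine ⟨u⁻¹ • d, mem_antipolar.2 fun k hk => ?_, ?_⟩
    · rw [map_smul, LinearMap.smul_apply, smul_eq_mul, hdv, inv_mul_eq_div, one_le_div hu]
      exact (hfK k hk).le
    · rw [map_smul, LinearMap.smul_apply, smul_eq_mul, hdv, inv_mul_eq_div, div_lt_one hu]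
      exact hfz
  · obtain ⟨w₀, hw₀⟩ := hne
    have hfz0 : f z < 0 := hfz.trans_le hu
    have hf0 : ∀ k ∈ K, 0 ≤ f k := fun k hk =>
      LinearMap.nonneg_of_lt_of_smul_subset hray f.toLinearMap hfK hk
    set s := |antipairing w₀ z| / -f z
    have hs : 0 ≤ s := div_nonneg (abs_nonneg _) (by linarith)
    refine ⟨w₀ + s • d, mem_antipolar.2 fun k hk => ?_, ?_⟩
    · rw [map_add, map_smul, LinearMap.add_apply, LinearMap.smul_apply, smul_eq_mul, hdv]
      nlinarith [mem_antipolar.1 hw₀ k hk, hf0 k hk]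
    · have hsfz : s * f z = -|antipairing w₀ z| := by
        rw [div_mul_eq_mul_div, div_neg, mul_div_assoc, div_self hfz0.ne, mul_one]
      rw [map_add, map_smul, LinearMap.add_apply, LinearMap.smul_apply, smul_eq_mul, hdv, hsfz]
      linarith [le_abs_self (antipairing w₀ z)]

theorem antipolar_antipolar_eq : antipolar (antipolar K) = K := by
  refine Subset.antisymm (fun z hz => ?_) (subset_antipolar_antipolar K)
  by_contra hzK
  obtain ⟨w, hw, hwz⟩ := exists_mem_antipolar_antipairing_lt_one hconv hclosed hray hne hzK
  exact hwz.not_ge (antipairing_comm w z ▸ mem_antipolar.1 hz w hw)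

end Bipolar

/-- If a nonempty `Ω ⊆ ℝ²` is strictly separated from the origin, then `Ω^◇`
satisfies property (i), and `Ω^{◇◇} = closure(convexHull(⋃_{λ ≥ 1} λΩ))`. -/
theorem antipolar_of_strictlySeparated
    (Ω : Set (ℝ × ℝ)) (hne : Ω.Nonempty)
    (hsep : StrictlySeparatedFromOrigin Ω) :
    PropI (antipolar Ω) ∧
      antipolar (antipolar Ω) =
        closure (convexHull ℝ (⋃ c ∈ Set.Ici (1 : ℝ), c • Ω)) := by
  have hK : antipolar (closure (convexHull ℝ (⋃ c ∈ Ici (1 : ℝ), c • Ω))) = antipolar Ω := by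
    rw [antipolar_closure_convexHull, antipolar_biUnion_smul]
  refine ⟨⟨hsep.antipolar_nonempty, convex_antipolar Ω, isClosed_antipolar Ω,
    zero_notMem_antipolar hne, fun c hc => smul_antipolar_subset hc.le⟩, ?_⟩
  rw [← hK]
  exact antipolar_antipolar_eq (convex_convexHull ℝ _).closure isClosed_closure
    (fun c hc => smul_closure_convexHull_subset (smul_biUnion_smul_subset Ω hc))
    (hK ▸ hsep.antipolar_nonempty)
end

section
/- Let Ω ⊆ ℝ² satisfy properties (i) and (*). Then for every boundary point ω = (x,y) ∈ ∂Ω there exists a point (p,q) in the boundary ∂Ω^◇ of the antipolar such that px − qy = 1 (i.e., ω lies on the line L(p,q)). -/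
open scoped Pointwise

/-- Property (*): no ray from the origin lies on the boundary of `Ω`,
i.e. `λΩ ∩ ∂Ω = ∅` for all `λ > 1`. -/
def PropStar (Ω : Set (ℝ × ℝ)) : Prop :=
  ∀ c : ℝ, 1 < c → (c • Ω) ∩ frontier Ω = ∅

/-!
A boundary point `ω` of `Ω` is not interior, while `2ω` is interior by (*) and the ray property.
Separating `ω` from the open convex set `interior Ω` gives a functional `f` with `f < f ω` on
`interior Ω`, hence `f ≤ f ω` on its closure `Ω`, and `f (2ω) < f ω` forces `f ω < 0`.
Normalized so that `g ω = 1`, the functional `g = f / f ω` is `≥ 1` on `Ω`: its coefficients form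
a point of `Ω^◇` whose line passes through `ω`. No dilate `t • (p,q)` with `t < 1` lies in `Ω^◇`,
since it takes the value `t` at `ω`, so `(p,q)` is a boundary point of `Ω^◇`.
-/

theorem PropStar.smul_mem_interior {Ω : Set (ℝ × ℝ)} (hstar : PropStar Ω)
    (hray : ∀ c : ℝ, 1 < c → c • Ω ⊆ Ω) {z : ℝ × ℝ} (hz : z ∈ Ω) {c : ℝ} (hc : 1 < c) :
    c • z ∈ interior Ω := by
  have hcz : c • z ∈ c • Ω := Set.smul_mem_smul_set hz
  have hnot : c • z ∉ frontier Ω := fun hfr =>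
    (Set.eq_empty_iff_forall_notMem.1 (hstar c hc)) _ ⟨hcz, hfr⟩
  by_contra hint
  exact hnot ⟨subset_closure (hray c hc hcz), hint⟩

theorem exists_dual_eq_one_le_of_smul_mem_interior {E : Type*} [TopologicalSpace E]
    [AddCommGroup E] [Module ℝ E] [IsTopologicalAddGroup E] [ContinuousSMul ℝ E]
    {Ω : Set E} (hΩ : Convex ℝ Ω) {ω : E} (hω : ω ∉ interior Ω) {c : ℝ} (hc : 1 < c)
    (hcω : c • ω ∈ interior Ω) :
    ∃ g : StrongDual ℝ E, g ω = 1 ∧ ∀ z ∈ Ω, 1 ≤ g z := by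
  obtain ⟨f, hf⟩ := geometric_hahn_banach_open_point hΩ.interior isOpen_interior hω
  have hfω : f ω < 0 := by
    have hlt := hf _ hcω
    rw [map_smul, smul_eq_mul] at hlt
    nlinarith
  have hle : ∀ z ∈ Ω, f z ≤ f ω := by
    intro z hz
    have hz' : z ∈ closure (interior Ω) := by
      rw [hΩ.closure_interior_eq_closure_of_nonempty_interior ⟨_, hcω⟩]
      exact subset_closure hz
    exact closure_minimal (fun y hy => (hf y hy).le) (isClosed_Iic.preimage f.continuous) hz'
  refine ⟨(f ω)⁻¹ • f, by simp [hfω.ne], fun z hz => ?_⟩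
  rw [smul_apply, smul_eq_mul, inv_mul_eq_div, one_le_div_of_neg hfω]
  exact hle z hz

theorem mem_frontier_antipolar {Ω : Set (ℝ × ℝ)} {pq ω : ℝ × ℝ} (hpq : pq ∈ antipolar Ω)
    (hω : ω ∈ Ω) (hline : pq.1 * ω.1 - pq.2 * ω.2 = 1) : pq ∈ frontier (antipolar Ω) := by
  rw [frontier_eq_closure_inter_closure]
  refine ⟨subset_closure hpq, ?_⟩
  have hlim : Filter.Tendsto (fun t : ℝ => t • pq) (nhdsWithin 1 (Set.Iio 1)) (nhds pq) :=
    ((continuous_id.smul continuous_const).tendsto' 1 pq (one_smul ℝ pq)).mono_left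
      nhdsWithin_le_nhds
  refine mem_closure_of_tendsto hlim (eventually_nhdsWithin_of_forall fun t (ht : t < 1) hmem => ?_)
  have hval := hmem ω hω
  simp only [Prod.smul_fst, Prod.smul_snd, smul_eq_mul] at hval
  have : t * pq.1 * ω.1 - t * pq.2 * ω.2 = t := by linear_combination t * hline
  linarith

/-- If `Ω` satisfies (i) and (*), then each boundary point `ω = (x,y) ∈ ∂Ω` lies
on the line `L(p,q) = {p·x − q·y = 1}` for some `(p,q) ∈ ∂Ω^◇`. -/
theorem boundary_point_on_line_of_propStar
    (Ω : Set (ℝ × ℝ)) (hΩ : PropI Ω) (hstar : PropStar Ω) :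
    ∀ ω ∈ frontier Ω, ∃ pq ∈ frontier (antipolar Ω),
      pq.1 * ω.1 - pq.2 * ω.2 = 1 := by
  obtain ⟨-, hconv, hclosed, -, hray⟩ := hΩ
  intro ω hω
  have hωΩ : ω ∈ Ω := hclosed.frontier_subset hω
  obtain ⟨g, hgω, hg⟩ := exists_dual_eq_one_le_of_smul_mem_interior hconv hω.2 one_lt_two
    (hstar.smul_mem_interior hray hωΩ one_lt_two)
  have hpair : ∀ z : ℝ × ℝ, g (1, 0) * z.1 - -g (0, 1) * z.2 = g z := fun z => by
    have hz : z = z.1 • ((1 : ℝ), (0 : ℝ)) + z.2 • ((0 : ℝ), (1 : ℝ)) := by ext <;> simp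
    rw [hz, map_add, map_smul, map_smul]
    simp [mul_comm]
  have hmem : (g (1, 0), -g (0, 1)) ∈ antipolar Ω := fun z hz => (hpair z).symm ▸ hg z hz
  exact ⟨_, mem_frontier_antipolar hmem hωΩ ((hpair ω).trans hgω), (hpair ω).trans hgω⟩
end

section
/- Let Ω ⊆ ℝ² satisfy properties (i) and (**). Then for every point (p,q) in the boundary ∂Ω^◇ of the antipolar there exists a boundary point ω = (x,y) ∈ ∂Ω with px − qy = 1 (i.e., the line L(p,q) meets Ω, necessarily in a boundary point). -/
open scoped Pointwise

/-- The closed cone generated by `Ω`: `C = closure(ℝ₊Ω)`. -/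
def posCone (Ω : Set (ℝ × ℝ)) : Set (ℝ × ℝ) :=
  closure {x | ∃ t : ℝ, 0 ≤ t ∧ ∃ ω ∈ Ω, x = t • ω}

/-- `e` is a direction of a boundary ray of `C`: `e ≠ 0` and the whole ray
`ℝ₊ e` is contained in the frontier of `C`. -/
def IsBoundaryRayDir (C : Set (ℝ × ℝ)) (e : ℝ × ℝ) : Prop :=
  e ≠ 0 ∧ ∀ t : ℝ, 0 ≤ t → t • e ∈ frontier C

/-- Property (**): the boundary `∂Ω` comes arbitrarily close to each boundary
ray of the cone `C = closure(ℝ₊Ω)`, i.e. `dist(l₀, Ω) = dist(l₁, Ω) = 0`. -/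
def PropSS (Ω : Set (ℝ × ℝ)) : Prop :=
  ∀ e : ℝ × ℝ, IsBoundaryRayDir (posCone Ω) e →
    ∀ ε : ℝ, 0 < ε → ∃ t : ℝ, 0 ≤ t ∧ ∃ b ∈ Ω, dist (t • e) b < ε

set_option maxHeartbeats 1000000 in
/-- If `Ω` satisfies (i) and (**), then for every `(p,q) ∈ ∂Ω^◇` there is a
boundary point `ω = (x,y) ∈ ∂Ω` with `p·x − q·y = 1`. -/
theorem line_meets_boundary_of_propSS
    (Ω : Set (ℝ × ℝ)) (hΩ : PropI Ω) (hss : PropSS Ω) :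
    ∀ pq ∈ frontier (antipolar Ω), ∃ ω ∈ frontier Ω,
      pq.1 * ω.1 - pq.2 * ω.2 = 1 := by
  obtain ⟨hne, _hconv, hclosed, h0, _hray⟩ := hΩ
  intro pq hpq
  set p := pq.1 with hp
  set q := pq.2 with hq
  set f : ℝ × ℝ → ℝ := fun z => p * z.1 - q * z.2 with hf
  have hfc : Continuous f := by fun_prop
  have hfsmul : ∀ (c : ℝ) (z : ℝ × ℝ), f (c • z) = c * f z := by
    intro c z; simp only [hf, Prod.smul_fst, Prod.smul_snd, smul_eq_mul]; ring
  -- antipolar is closed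
  have hanticl : IsClosed (antipolar Ω) := by
    have heq : antipolar Ω = ⋂ xy ∈ Ω, {z : ℝ × ℝ | 1 ≤ z.1 * xy.1 - z.2 * xy.2} := by
      ext z; simp [antipolar]
    rw [heq]
    exact isClosed_biInter fun xy _ => isClosed_le continuous_const (by fun_prop)
  have hmem : pq ∈ antipolar Ω := hanticl.closure_eq ▸ hpq.1
  have hnotint : pq ∉ interior (antipolar Ω) := hpq.2
  have hf1 : ∀ z ∈ Ω, 1 ≤ f z := fun z hz => hmem z hz
  -- pq ≠ 0
  have hv2 : 0 < p ^ 2 + q ^ 2 := by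
    by_contra h
    push_neg at h
    have hp0 : p = 0 := by nlinarith [sq_nonneg p, sq_nonneg q]
    have hq0 : q = 0 := by nlinarith [sq_nonneg p, sq_nonneg q]
    obtain ⟨w, hw⟩ := hne
    have := hf1 w hw
    rw [hf] at this
    simp only [hp0, hq0] at this
    linarith
  set S : Set (ℝ × ℝ) := {x | ∃ t : ℝ, 0 ≤ t ∧ ∃ ω ∈ Ω, x = t • ω} with hS
  have hposS : posCone Ω = closure S := rfl
  have hΩC : Ω ⊆ posCone Ω := by
    intro ω hω
    exact subset_closure ⟨1, by norm_num, ω, hω, (one_smul ℝ ω).symm⟩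
  have hfS : ∀ x ∈ S, 0 ≤ f x := by
    rintro x ⟨t, ht, ω, hω, rfl⟩
    rw [hfsmul]
    have := hf1 ω hω
    nlinarith
  have hfC : ∀ x ∈ posCone Ω, 0 ≤ f x := by
    intro x hx
    have : closure S ⊆ {z | 0 ≤ f z} :=
      closure_minimal hfS (isClosed_le continuous_const hfc)
    exact this hx
  have hcone : ∀ t : ℝ, 0 ≤ t → ∀ x ∈ posCone Ω, t • x ∈ posCone Ω := by
    intro t ht x hx
    have hcont : Continuous fun y : ℝ × ℝ => t • y := by fun_prop
    have h1 : (fun y : ℝ × ℝ => t • y) '' S ⊆ S := by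
      rintro _ ⟨y, ⟨s, hs, ω, hω, rfl⟩, rfl⟩
      exact ⟨t * s, mul_nonneg ht hs, ω, hω, (mul_smul t s ω).symm⟩
    have h2 : t • x ∈ closure ((fun y : ℝ × ℝ => t • y) '' S) :=
      image_closure_subset_closure_image hcont ⟨x, hx, rfl⟩
    exact closure_mono h1 h2
  -- f > 0 on the cone minus origin
  have hfpos : ∀ x ∈ posCone Ω, x ≠ 0 → 0 < f x := by
    intro x hx hx0
    rcases (hfC x hx).lt_or_eq with h | h
    · exact h
    · exfalso
      have hfx : f x = 0 := h.symm
      have hbdry : IsBoundaryRayDir (posCone Ω) x := by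
        refine ⟨hx0, fun t ht => ?_⟩
        have htx : t • x ∈ posCone Ω := hcone t ht x hx
        refine ⟨subset_closure htx, fun hint => ?_⟩
        rw [mem_interior_iff_mem_nhds, Metric.mem_nhds_iff] at hint
        obtain ⟨ε, hε, hball⟩ := hint
        set v : ℝ × ℝ := (p, -q) with hv
        have hvn : 0 < ‖v‖ := by
          rw [Prod.norm_def]
          simp only [Real.norm_eq_abs]
          by_contra hc
          push_neg at hc
          have h1 : |p| ≤ 0 := le_trans (le_max_left _ _) hc
          have h2 : |(-q)| ≤ 0 := le_trans (le_max_right _ _) hc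
          have : p = 0 := abs_nonpos_iff.mp h1
          have : q = 0 := by have := abs_nonpos_iff.mp h2; linarith [neg_eq_zero.mp this]
          nlinarith
        set s : ℝ := ε / (2 * ‖v‖) with hsdef
        have hs : 0 < s := by positivity
        have hzball : t • x - s • v ∈ Metric.ball (t • x) ε := by
          rw [Metric.mem_ball, dist_eq_norm]
          have : t • x - s • v - t • x = -(s • v) := by abel
          rw [this, norm_neg, norm_smul, Real.norm_eq_abs, abs_of_pos hs]
          have hcl : s * ‖v‖ = ε / 2 := by rw [hsdef]; field_simp
          rw [hcl]; linarith
        have hzC : t • x - s • v ∈ posCone Ω := hball hzball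
        have := hfC _ hzC
        have hcalc : f (t • x - s • v) = t * f x - s * (p ^ 2 + q ^ 2) := by
          simp only [hf, hv, Prod.smul_fst, Prod.smul_snd, Prod.fst_sub, Prod.snd_sub,
            smul_eq_mul]
          ring
        rw [hcalc, hfx] at this
        nlinarith
      -- use PropSS to contradict f ≥ 1 on Ω
      set M : ℝ := |p| + |q| with hM
      have hM0 : 0 < M := by
        rcases lt_trichotomy p 0 with h | h | h
        · have : 0 < |p| := abs_pos.mpr (ne_of_lt h)
          positivity
        · have hq0 : q ≠ 0 := by intro hc; rw [h, hc] at hv2; norm_num at hv2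
          have : 0 < |q| := abs_pos.mpr hq0
          positivity
        · have : 0 < |p| := abs_pos.mpr (ne_of_gt h)
          positivity
      obtain ⟨t, ht, b, hb, hdist⟩ := hss x hbdry (1 / (M + 1)) (by positivity)
      have hd1 : |b.1 - t * x.1| ≤ dist (t • x) b := by
        rw [Prod.dist_eq]
        refine le_trans ?_ (le_max_left _ _)
        rw [Real.dist_eq, Prod.smul_fst, smul_eq_mul, abs_sub_comm]
      have hd2 : |b.2 - t * x.2| ≤ dist (t • x) b := by
        rw [Prod.dist_eq]
        refine le_trans ?_ (le_max_right _ _)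
        rw [Real.dist_eq, Prod.smul_snd, smul_eq_mul, abs_sub_comm]
      have e1 : p * (b.1 - t * x.1) ≤ |p| * dist (t • x) b := by
        calc p * (b.1 - t * x.1) ≤ |p * (b.1 - t * x.1)| := le_abs_self _
          _ = |p| * |b.1 - t * x.1| := abs_mul _ _
          _ ≤ |p| * dist (t • x) b := mul_le_mul_of_nonneg_left hd1 (abs_nonneg p)
      have e2 : -(q * (b.2 - t * x.2)) ≤ |q| * dist (t • x) b := by
        calc -(q * (b.2 - t * x.2)) ≤ |(-(q * (b.2 - t * x.2)))| := le_abs_self _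
          _ = |q| * |b.2 - t * x.2| := by rw [abs_neg, abs_mul]
          _ ≤ |q| * dist (t • x) b := mul_le_mul_of_nonneg_left hd2 (abs_nonneg q)
      have hfb : 1 ≤ f b := hf1 b hb
      have hftx : f (t • x) = 0 := by rw [hfsmul, hfx]; ring
      have hsplit : f b = f (t • x) + (p * (b.1 - t * x.1) - q * (b.2 - t * x.2)) := by
        simp only [hf, Prod.smul_fst, Prod.smul_snd, smul_eq_mul]; ring
      have hdn : 0 ≤ dist (t • x) b := dist_nonneg
      have hMd : M * dist (t • x) b < M * (1 / (M + 1)) :=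
        mul_lt_mul_of_pos_left hdist hM0
      have hlt1 : M * (1 / (M + 1)) < 1 := by
        rw [mul_one_div, div_lt_one (by linarith)]
        linarith
      nlinarith [e1, e2]
  -- minimum of f on cone ∩ unit sphere
  have hKcpt : IsCompact (posCone Ω ∩ Metric.sphere (0 : ℝ × ℝ) 1) :=
    (isCompact_sphere 0 1).inter_left isClosed_closure
  obtain ⟨w1, hw1⟩ := hne
  have hw1ne : w1 ≠ 0 := fun hc => h0 (hc ▸ hw1)
  have hw1n : 0 < ‖w1‖ := norm_pos_iff.mpr hw1ne
  have hKne : (posCone Ω ∩ Metric.sphere (0 : ℝ × ℝ) 1).Nonempty := by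
    refine ⟨‖w1‖⁻¹ • w1, hcone _ (by positivity) _ (hΩC hw1), ?_⟩
    rw [mem_sphere_zero_iff_norm, norm_smul, Real.norm_eq_abs, abs_of_pos (by positivity)]
    field_simp
  obtain ⟨e, heK, hemin⟩ := hKcpt.exists_isMinOn hKne hfc.continuousOn
  set m : ℝ := f e with hm
  have hme : ‖e‖ = 1 := mem_sphere_zero_iff_norm.mp heK.2
  have hm0 : 0 < m := hfpos e heK.1 (by intro hc; rw [hc] at hme; simp at hme)
  have hlow : ∀ z ∈ posCone Ω, m * ‖z‖ ≤ f z := by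
    intro z hz
    rcases eq_or_ne z 0 with rfl | hz0
    · simp [hf]
    · have hzn : 0 < ‖z‖ := norm_pos_iff.mpr hz0
      have hu : ‖z‖⁻¹ • z ∈ posCone Ω ∩ Metric.sphere (0 : ℝ × ℝ) 1 := by
        refine ⟨hcone _ (by positivity) _ hz, ?_⟩
        rw [mem_sphere_zero_iff_norm, norm_smul, Real.norm_eq_abs,
          abs_of_pos (by positivity)]
        field_simp
      have := isMinOn_iff.mp hemin _ hu
      rw [hfsmul] at this
      have h3 : ‖z‖ * m ≤ ‖z‖ * (‖z‖⁻¹ * f z) := mul_le_mul_of_nonneg_left this hzn.le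
      rw [← mul_assoc, mul_inv_cancel₀ hzn.ne', one_mul] at h3
      linarith
  -- attainment of the minimum of f on Ω
  have hfw1 : 1 ≤ f w1 := hf1 w1 hw1
  set R : ℝ := f w1 / m + 1 with hR
  have hKcpt' : IsCompact (Ω ∩ Metric.closedBall (0 : ℝ × ℝ) R) :=
    (isCompact_closedBall 0 R).inter_left hclosed
  have hw1R : w1 ∈ Ω ∩ Metric.closedBall (0 : ℝ × ℝ) R := by
    refine ⟨hw1, mem_closedBall_zero_iff.mpr ?_⟩
    have := hlow w1 (hΩC hw1)
    have h4 : ‖w1‖ ≤ f w1 / m := by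
      rw [le_div_iff₀ hm0]
      nlinarith
    rw [hR]
    linarith
  obtain ⟨ω₀, hω₀K, hω₀min⟩ := hKcpt'.exists_isMinOn ⟨w1, hw1R⟩ hfc.continuousOn
  have hω₀ : ω₀ ∈ Ω := hω₀K.1
  have hglobal : ∀ z ∈ Ω, f ω₀ ≤ f z := by
    intro z hz
    by_cases hzR : ‖z‖ ≤ R
    · exact isMinOn_iff.mp hω₀min _ ⟨hz, mem_closedBall_zero_iff.mpr hzR⟩
    · push_neg at hzR
      have h5 : m * ‖z‖ ≤ f z := hlow z (hΩC hz)
      have h6 : f ω₀ ≤ f w1 := isMinOn_iff.mp hω₀min _ hw1R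
      have h7 : m * R = f w1 + m := by rw [hR]; field_simp
      nlinarith
  -- the minimum value is 1
  have hα1 : 1 ≤ f ω₀ := hf1 ω₀ hω₀
  have hfeq : f ω₀ = 1 := by
    by_contra hne'
    have hα : 1 < f ω₀ := lt_of_le_of_ne hα1 (Ne.symm hne')
    set α : ℝ := f ω₀ with hαdef
    set δ : ℝ := (α - 1) * m / (2 * α) with hδdef
    have hδpos : 0 < δ := by
      apply div_pos
      · nlinarith
      · linarith
    have hball : Metric.ball pq δ ⊆ antipolar Ω := by
      intro r hr
      intro z hz
      have hd : dist r pq < δ := Metric.mem_ball.mp hr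
      have hd1 : |r.1 - p| ≤ dist r pq := by
        rw [Prod.dist_eq]
        exact le_trans (by rw [Real.dist_eq, hp]) (le_max_left _ _)
      have hd2 : |r.2 - q| ≤ dist r pq := by
        rw [Prod.dist_eq]
        exact le_trans (by rw [Real.dist_eq, hq]) (le_max_right _ _)
      have hz1 : |z.1| ≤ ‖z‖ := by
        rw [← Real.norm_eq_abs]; exact norm_fst_le z
      have hz2 : |z.2| ≤ ‖z‖ := by
        rw [← Real.norm_eq_abs]; exact norm_snd_le z
      have hzn : 0 ≤ ‖z‖ := norm_nonneg z
      have eb1 : -(δ * ‖z‖) ≤ (r.1 - p) * z.1 := by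
        have habs : |(r.1 - p) * z.1| ≤ δ * ‖z‖ := by
          rw [abs_mul]
          exact mul_le_mul (le_of_lt (lt_of_le_of_lt hd1 hd)) hz1 (abs_nonneg _) hδpos.le
        linarith [neg_abs_le ((r.1 - p) * z.1)]
      have eb2 : -(δ * ‖z‖) ≤ -((r.2 - q) * z.2) := by
        have habs : |(r.2 - q) * z.2| ≤ δ * ‖z‖ := by
          rw [abs_mul]
          exact mul_le_mul (le_of_lt (lt_of_le_of_lt hd2 hd)) hz2 (abs_nonneg _) hδpos.le
        linarith [le_abs_self ((r.2 - q) * z.2)]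
      have hfz1 : α ≤ f z := hglobal z hz
      have hfz2 : m * ‖z‖ ≤ f z := hlow z (hΩC hz)
      have hexpand : r.1 * z.1 - r.2 * z.2
          = f z + ((r.1 - p) * z.1 + -((r.2 - q) * z.2)) := by
        simp only [hf]; ring
      have hkey : f z - 2 * δ * ‖z‖ ≤ r.1 * z.1 - r.2 * z.2 := by
        rw [hexpand]; linarith
      have hδ' : 2 * α * δ = (α - 1) * m := by
        rw [hδdef]; field_simp
      have hfin : 1 ≤ f z - 2 * δ * ‖z‖ := by
        have hprod : 0 ≤ (α - 1) * (f z - m * ‖z‖) :=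
          mul_nonneg (by linarith) (by linarith)
        nlinarith [hα, hfz1]
      linarith
    exact hnotint (interior_maximal hball Metric.isOpen_ball (Metric.mem_ball_self hδpos))
  -- ω₀ is a boundary point of Ω
  have hfront : ω₀ ∈ frontier Ω := by
    refine ⟨subset_closure hω₀, fun hint => ?_⟩
    rw [mem_interior_iff_mem_nhds, Metric.mem_nhds_iff] at hint
    obtain ⟨ε, hε, hball⟩ := hint
    set v : ℝ × ℝ := (p, -q) with hv
    have hvn : 0 < ‖v‖ := by
      rw [norm_pos_iff]
      intro hc
      rw [hv, Prod.mk_eq_zero] at hc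
      obtain ⟨h1, h2⟩ := hc
      rw [h1, neg_eq_zero.mp h2] at hv2
      norm_num at hv2
    set s : ℝ := ε / (2 * ‖v‖) with hsdef
    have hs : 0 < s := by positivity
    have hzball : ω₀ - s • v ∈ Metric.ball ω₀ ε := by
      rw [Metric.mem_ball, dist_eq_norm]
      have : ω₀ - s • v - ω₀ = -(s • v) := by abel
      rw [this, norm_neg, norm_smul, Real.norm_eq_abs, abs_of_pos hs]
      have hcl : s * ‖v‖ = ε / 2 := by rw [hsdef]; field_simp
      rw [hcl]; linarith
    have hzΩ : ω₀ - s • v ∈ Ω := hball hzball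
    have h8 := hf1 _ hzΩ
    have hcalc : f (ω₀ - s • v) = f ω₀ - s * (p ^ 2 + q ^ 2) := by
      simp only [hf, hv, Prod.smul_fst, Prod.smul_snd, Prod.fst_sub, Prod.snd_sub,
        smul_eq_mul]
      ring
    rw [hcalc, hfeq] at h8
    nlinarith
  exact ⟨ω₀, hfront, hfeq⟩
end

section
/- Let U ⊆ ℝⁿ be a nonempty closed convex set with 0 ∉ U and with the ray property λU ⊆ U for all λ ≥ 1. Define ν̊_U(ξ) = sup{λ > 0 : ξ ∈ λU} (with sup ∅ = −∞) and let ν_U be its upper semicontinuous hull, ν_U(ξ) = limsup_{η → ξ} ν̊_U(η). Then ν_U is an anti-norm on ℝⁿ. -/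
open scoped Pointwise
open Filter Topology

/-- An anti-norm on a real normed space `E`: a function `ν : E → ℝ ∪ {−∞}`
(encoded as an `EReal`-valued function never equal to `+∞`) that is concave,
upper semicontinuous (closed hypograph), positively homogeneous, has nonempty
effective domain, and is positive on the relative interior of its domain. -/
structure IsAntinorm {E : Type*} [NormedAddCommGroup E] [NormedSpace ℝ E]
    (ν : E → EReal) : Prop where
  ne_top : ∀ ξ, ν ξ ≠ ⊤
  concave : ∀ ξ η : E, ∀ a b : ℝ, 0 ≤ a → 0 ≤ b → a + b = 1 →
    (a : EReal) * ν ξ + (b : EReal) * ν η ≤ ν (a • ξ + b • η)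
  closed_hypograph : IsClosed {p : E × ℝ | (p.2 : EReal) ≤ ν p.1}
  pos_homog : ∀ c : ℝ, 0 ≤ c → ∀ ξ : E, ν (c • ξ) = (c : EReal) * ν ξ
  dom_nonempty : {ξ : E | ν ξ ≠ ⊥}.Nonempty
  pos_on_ri : ∀ ξ ∈ intrinsicInterior ℝ {ξ : E | ν ξ ≠ ⊥}, 0 < ν ξ

/-- `ν̊_U(ξ) = sup{λ > 0 : ξ ∈ λU}`, with `sup ∅ = −∞` (in `EReal`). -/
noncomputable def preAntinorm {E : Type*} [NormedAddCommGroup E]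
    [NormedSpace ℝ E] (U : Set E) (ξ : E) : EReal :=
  sSup {l : EReal | ∃ r : ℝ, 0 < r ∧ ξ ∈ r • U ∧ l = (r : EReal)}

/-- `ν_U(ξ) = limsup_{η → ξ} ν̊_U(η)`, the upper semicontinuous hull. -/
noncomputable def antinormOf {E : Type*} [NormedAddCommGroup E]
    [NormedSpace ℝ E] (U : Set E) (ξ : E) : EReal :=
  limsup (preAntinorm U) (𝓝 ξ)

/-!
By convexity, `rU + sU = (r + s)U` for `r, s > 0`, so `ν̊_U` is superadditive; it is positively
homogeneous, and it is bounded by `‖ξ‖ / d` where `d > 0` is the distance from `0` to `U`.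
Superadditivity and homogeneity pass to the upper semicontinuous hull `ν_U`, which is therefore
concave, finite, and vanishes at `0`. Since `ν̊_U` only takes the value `−∞` or positive values,
`ν_U ≥ 0` on its domain, while `ν_U ≥ 1` on `U`. A point of the relative interior of the domain
lies on an open segment from a point of the domain to a point of `U`, so concavity makes `ν_U`
positive there.
-/

theorem limsup_nonneg_of_ne_bot {α : Type*} {l : Filter α} {g : α → EReal}
    (hg : ∀ a, g a = ⊥ ∨ 0 ≤ g a) (hl : limsup g l ≠ ⊥) : 0 ≤ limsup g l := by
  by_contra! hneg
  refine hl (le_bot_iff.1 (limsup_le_of_le (by isBoundedDefault) ?_))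
  filter_upwards [eventually_lt_of_limsup_lt hneg] with a ha
  exact ((hg a).resolve_right ha.not_ge).le

section LimsupNhds

variable {X : Type*} [TopologicalSpace X] (f : X → EReal)

theorem le_limsup_nhds (x : X) : f x ≤ limsup f (𝓝 x) :=
  le_limsup_of_frequently_le' <|
    (frequently_pure (p := fun y => f x ≤ f y)).2 le_rfl |>.filter_mono (pure_le_nhds x)

theorem upperSemicontinuous_limsup_nhds : UpperSemicontinuous fun x => limsup f (𝓝 x) := by
  intro x y hxy
  obtain ⟨z, hxz, hzy⟩ := exists_between hxy
  filter_upwards [(eventually_lt_of_limsup_lt hxz).eventually_nhds] with x' hx'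
  exact (limsup_le_of_le (by isBoundedDefault) (hx'.mono fun _ => le_of_lt)).trans_lt hzy

theorem isClosed_hypograph_limsup_nhds :
    IsClosed {p : X × ℝ | (p.2 : EReal) ≤ limsup f (𝓝 p.1)} :=
  (upperSemicontinuous_limsup_nhds f).IsClosed_hypograph.preimage
    (continuous_fst.prodMk (continuous_coe_real_ereal.comp continuous_snd))

theorem limsup_nhds_add_limsup_nhds_le [Add X] [ContinuousAdd X]
    (hf : ∀ x y, f x + f y ≤ f (x + y)) (x y : X) :
    limsup f (𝓝 x) + limsup f (𝓝 y) ≤ limsup f (𝓝 (x + y)) := by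
  refine EReal.add_le_of_forall_lt fun a ha b hb => le_limsup_of_frequently_le' ?_
  have hprod : ∃ᶠ p in 𝓝 (x, y), a < f p.1 ∧ b < f p.2 := by
    rw [nhds_prod_eq]
    exact frequently_prod_and.2 ⟨frequently_lt_of_lt_limsup (by isBoundedDefault) ha,
      frequently_lt_of_lt_limsup (by isBoundedDefault) hb⟩
  exact (continuous_add.tendsto (x, y)).frequently
    (hprod.mono fun p hp => (add_le_add hp.1.le hp.2.le).trans (hf p.1 p.2))

end LimsupNhds

theorem EReal.map_smul_of_map_smul_le {E : Type*} [AddCommGroup E] [Module ℝ E] {g : E → EReal}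
    (h : ∀ c : ℝ, 0 < c → ∀ x, g (c • x) ≤ c * g x) {c : ℝ} (hc : 0 < c) (x : E) :
    g (c • x) = c * g x := by
  refine le_antisymm (h c hc x) ?_
  calc (c : EReal) * g x = c * g (c⁻¹ • c • x) := by rw [inv_smul_smul₀ hc.ne']
    _ ≤ c * (c⁻¹ * g (c • x)) :=
        mul_le_mul_of_nonneg_left (h _ (inv_pos.2 hc) _) (EReal.coe_nonneg.2 hc.le)
    _ = g (c • x) := by
        rw [← mul_assoc, ← EReal.coe_mul, mul_inv_cancel₀ hc.ne', EReal.coe_one, one_mul]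

section PreAntinorm

variable {E : Type*} [NormedAddCommGroup E] [NormedSpace ℝ E] {U : Set E}

theorem le_preAntinorm {r : ℝ} (hr : 0 < r) {ξ : E} (h : ξ ∈ r • U) :
    (r : EReal) ≤ preAntinorm U ξ :=
  le_sSup ⟨r, hr, h, rfl⟩

theorem exists_lt_of_lt_preAntinorm {ξ : E} {a : EReal} (h : a < preAntinorm U ξ) :
    ∃ r : ℝ, 0 < r ∧ ξ ∈ r • U ∧ a < r := by
  obtain ⟨_, ⟨r, hr, hξ, rfl⟩, har⟩ := lt_sSup_iff.1 h
  exact ⟨r, hr, hξ, har⟩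

theorem preAntinorm_eq_bot_or_nonneg (ξ : E) : preAntinorm U ξ = ⊥ ∨ 0 ≤ preAntinorm U ξ := by
  by_cases h : ∃ r : ℝ, 0 < r ∧ ξ ∈ r • U
  · obtain ⟨r, hr, hξ⟩ := h
    exact Or.inr ((EReal.coe_nonneg.2 hr.le).trans (le_preAntinorm hr hξ))
  · refine Or.inl (sSup_eq_bot.2 ?_)
    rintro _ ⟨r, hr, hξ, rfl⟩
    exact absurd ⟨r, hr, hξ⟩ h

theorem preAntinorm_le_norm_div {d : ℝ} (hd : 0 < d) (hU : ∀ u ∈ U, d ≤ ‖u‖) (ξ : E) :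
    preAntinorm U ξ ≤ ((‖ξ‖ / d : ℝ) : EReal) := by
  refine sSup_le ?_
  rintro _ ⟨r, hr, ⟨u, hu, rfl⟩, rfl⟩
  rw [EReal.coe_le_coe_iff, norm_smul, Real.norm_of_nonneg hr.le, le_div_iff₀ hd]
  exact mul_le_mul_of_nonneg_left (hU u hu) hr.le

theorem preAntinorm_smul_le {c : ℝ} (hc : 0 < c) (ξ : E) :
    preAntinorm U (c • ξ) ≤ c * preAntinorm U ξ := by
  refine sSup_le ?_
  rintro _ ⟨r, hr, hcξ, rfl⟩
  have hξ : ξ ∈ (c⁻¹ * r) • U := by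
    simpa [smul_smul, hc.ne'] using Set.smul_mem_smul_set (a := c⁻¹) hcξ
  calc (r : EReal) = c * ((c⁻¹ * r : ℝ) : EReal) := by
        rw [← EReal.coe_mul, mul_inv_cancel_left₀ hc.ne']
    _ ≤ c * preAntinorm U ξ :=
        mul_le_mul_of_nonneg_left (le_preAntinorm (by positivity) hξ) (EReal.coe_nonneg.2 hc.le)

theorem preAntinorm_smul {c : ℝ} (hc : 0 < c) (ξ : E) :
    preAntinorm U (c • ξ) = c * preAntinorm U ξ :=
  EReal.map_smul_of_map_smul_le (fun _ hc' => preAntinorm_smul_le hc') hc ξ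

theorem preAntinorm_add_preAntinorm_le (hU : Convex ℝ U) (ξ η : E) :
    preAntinorm U ξ + preAntinorm U η ≤ preAntinorm U (ξ + η) := by
  refine EReal.add_le_of_forall_lt fun a ha b hb => ?_
  obtain ⟨r, hr, hξ, har⟩ := exists_lt_of_lt_preAntinorm ha
  obtain ⟨s, hs, hη, hbs⟩ := exists_lt_of_lt_preAntinorm hb
  have hξη : ξ + η ∈ (r + s) • U := by
    rw [hU.add_smul hr.le hs.le]
    exact Set.add_mem_add hξ hη
  calc a + b ≤ ((r + s : ℝ) : EReal) := by rw [EReal.coe_add]; exact add_le_add har.le hbs.le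
    _ ≤ preAntinorm U (ξ + η) := le_preAntinorm (by positivity) hξη

end PreAntinorm

theorem exists_mem_openSegment_of_mem_intrinsicInterior {E : Type*} [AddCommGroup E]
    [Module ℝ E] [TopologicalSpace E] [IsTopologicalAddGroup E] [ContinuousSMul ℝ E]
    {s : Set E} {x u : E} (hx : x ∈ intrinsicInterior ℝ s) (hu : u ∈ s) :
    ∃ w ∈ s, x ∈ openSegment ℝ w u := by
  obtain ⟨y, hy, rfl⟩ := mem_intrinsicInterior.1 hx
  have hu' : u ∈ affineSpan ℝ s := subset_affineSpan ℝ s hu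
  let line : ℝ → affineSpan ℝ s := fun t =>
    ⟨t • ((y : E) - u) + y, AffineSubspace.vadd_mem_of_mem_direction
      (Submodule.smul_mem _ t (AffineSubspace.vsub_mem_direction y.2 hu')) y.2⟩
  have hline : ∀ᶠ t in 𝓝 (0 : ℝ), line t ∈ interior ((↑) ⁻¹' s) := by
    refine (Continuous.subtype_mk (by fun_prop) _).continuousAt.preimage_mem_nhds ?_
    simpa [line] using isOpen_interior.mem_nhds hy
  obtain ⟨t, hts, ht : 0 < t⟩ := ((eventually_nhdsWithin_of_eventually_nhds hline).and
    (self_mem_nhdsWithin (s := Set.Ioi 0))).exists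
  have hw : line t ∈ ((↑) ⁻¹' s : Set (affineSpan ℝ s)) := interior_subset hts
  refine ⟨line t, hw, (1 + t)⁻¹, t / (1 + t), by positivity, by positivity, by field_simp, ?_⟩
  show (1 + t)⁻¹ • (t • ((y : E) - u) + y) + (t / (1 + t)) • u = y
  match_scalars <;> field_simp <;> ring

section Antinorm

variable {E : Type*} [NormedAddCommGroup E] [NormedSpace ℝ E] {U : Set E}

theorem antinormOf_le_norm_div {d : ℝ} (hd : 0 < d) (hU : ∀ u ∈ U, d ≤ ‖u‖) (ξ : E) :
    antinormOf U ξ ≤ ((‖ξ‖ / d : ℝ) : EReal) :=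
  calc antinormOf U ξ ≤ limsup (fun η : E => ((‖η‖ / d : ℝ) : EReal)) (𝓝 ξ) :=
        limsup_le_limsup (Eventually.of_forall (preAntinorm_le_norm_div hd hU))
    _ = ((‖ξ‖ / d : ℝ) : EReal) :=
        ((continuous_coe_real_ereal.comp (continuous_norm.div_const d)).tendsto ξ).limsup_eq

theorem antinormOf_zero {d : ℝ} (hd : 0 < d) (hU : ∀ u ∈ U, d ≤ ‖u‖) (hne : U.Nonempty) :
    antinormOf U 0 = 0 := by
  refine le_antisymm (by simpa using antinormOf_le_norm_div hd hU 0) ?_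
  obtain ⟨u, hu⟩ := hne
  have hray : Tendsto (fun t : ℝ => t • u) (𝓝[>] 0) (𝓝 0) := by
    simpa using (tendsto_nhdsWithin_of_tendsto_nhds (tendsto_id (x := 𝓝 (0 : ℝ)))).smul_const u
  refine le_limsup_of_frequently_le' (hray.frequently (Eventually.frequently ?_))
  filter_upwards [self_mem_nhdsWithin] with t (ht : 0 < t)
  exact (EReal.coe_nonneg.2 ht.le).trans (le_preAntinorm ht (Set.smul_mem_smul_set hu))

theorem antinormOf_smul_of_pos {c : ℝ} (hc : 0 < c) (ξ : E) :
    antinormOf U (c • ξ) = c * antinormOf U ξ := by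
  have hnhds : 𝓝 (c • ξ) = map (c • ·) (𝓝 ξ) :=
    ((Homeomorph.smulOfNeZero c hc.ne').map_nhds_eq ξ).symm
  rw [antinormOf, antinormOf, hnhds, ← limsup_comp]
  simp only [Function.comp_def, preAntinorm_smul hc]
  exact EReal.limsup_const_mul_of_nonneg_of_ne_top (EReal.coe_nonneg.2 hc.le) (EReal.coe_ne_top c)

theorem antinormOf_smul {d : ℝ} (hd : 0 < d) (hU : ∀ u ∈ U, d ≤ ‖u‖) (hne : U.Nonempty)
    {c : ℝ} (hc : 0 ≤ c) (ξ : E) : antinormOf U (c • ξ) = c * antinormOf U ξ := by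
  rcases hc.eq_or_lt with rfl | hc
  · simp [antinormOf_zero hd hU hne]
  · exact antinormOf_smul_of_pos hc ξ

theorem smul_antinormOf_add_smul_antinormOf_le (hconv : Convex ℝ U) {d : ℝ} (hd : 0 < d)
    (hU : ∀ u ∈ U, d ≤ ‖u‖) (hne : U.Nonempty) {a b : ℝ} (ha : 0 ≤ a) (hb : 0 ≤ b) (ξ η : E) :
    a * antinormOf U ξ + b * antinormOf U η ≤ antinormOf U (a • ξ + b • η) := by
  rw [← antinormOf_smul hd hU hne ha, ← antinormOf_smul hd hU hne hb]
  exact limsup_nhds_add_limsup_nhds_le _ (preAntinorm_add_preAntinorm_le hconv) _ _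

theorem one_le_antinormOf {u : E} (hu : u ∈ U) : 1 ≤ antinormOf U u :=
  (le_preAntinorm one_pos (by simpa using hu)).trans (le_limsup_nhds _ u)

theorem antinormOf_nonneg {ξ : E} (h : antinormOf U ξ ≠ ⊥) : 0 ≤ antinormOf U ξ :=
  limsup_nonneg_of_ne_bot preAntinorm_eq_bot_or_nonneg h

end Antinorm

theorem antinormOf_isAntinorm_general {n : ℕ} (U : Set (EuclideanSpace ℝ (Fin n)))
    (hne : U.Nonempty) (hcl : IsClosed U) (hconv : Convex ℝ U)
    (h0 : (0 : EuclideanSpace ℝ (Fin n)) ∉ U) :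
    IsAntinorm (antinormOf U) := by
  obtain ⟨d, hd, hdU⟩ : ∃ d > 0, ∀ u ∈ U, d ≤ ‖u‖ :=
    ⟨_, (hcl.notMem_iff_infDist_pos hne).1 h0,
      fun u hu => (Metric.infDist_le_dist_of_mem hu).trans_eq (dist_zero_left u)⟩
  have hconc {a b : ℝ} (ha : 0 ≤ a) (hb : 0 ≤ b) :=
    smul_antinormOf_add_smul_antinormOf_le hconv hd hdU hne ha hb
  have ⟨u, hu⟩ := hne
  have hu_dom : antinormOf U u ≠ ⊥ :=
    ne_bot_of_le_ne_bot (EReal.coe_ne_bot 1) (one_le_antinormOf hu)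
  refine ⟨fun ξ => ((antinormOf_le_norm_div hd hdU ξ).trans_lt (EReal.coe_lt_top _)).ne,
    fun ξ η a b ha hb _ => hconc ha hb ξ η, isClosed_hypograph_limsup_nhds _,
    fun c hc => antinormOf_smul hd hdU hne hc, ⟨u, hu_dom⟩, fun ξ hξ => ?_⟩
  obtain ⟨w, hw, a, b, ha, hb, -, rfl⟩ :=
    exists_mem_openSegment_of_mem_intrinsicInterior hξ hu_dom
  calc (0 : EReal) < b := EReal.coe_pos.2 hb
    _ = a * 0 + b * 1 := by simp
    _ ≤ a * antinormOf U w + b * antinormOf U u := by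
        gcongr
        exacts [antinormOf_nonneg hw, one_le_antinormOf hu]
    _ ≤ antinormOf U (a • w + b • u) := hconc ha.le hb.le w u

/-- If `U ⊆ ℝⁿ` is nonempty, closed, convex, does not contain the origin and
has the ray property `λU ⊆ U` for all `λ ≥ 1`, then `ν_U` is an anti-norm. -/
theorem antinormOf_isAntinorm {n : ℕ} (U : Set (EuclideanSpace ℝ (Fin n)))
    (hne : U.Nonempty) (hcl : IsClosed U) (hconv : Convex ℝ U)
    (h0 : (0 : EuclideanSpace ℝ (Fin n)) ∉ U)
    (hray : ∀ c : ℝ, 1 ≤ c → c • U ⊆ U) :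
    IsAntinorm (antinormOf U) :=
  antinormOf_isAntinorm_general U hne hcl hconv h0
end

section
/- Let Ω ⊆ ℝ² satisfy property (i). Then: (1) if ω ∈ int Ω, then λω ∈ int Ω for every λ > 1; (2) if ω ∈ ∂Ω, then either λω ∈ int Ω for every λ > 1, or λω ∈ ∂Ω for every λ > 1. -/
open scoped Pointwise

/-- If `Ω ⊆ ℝ²` satisfies property (i), then: (1) for `ω ∈ int Ω` one has
`λω ∈ int Ω` for all `λ > 1`; (2) for `ω ∈ ∂Ω`, either `λω ∈ int Ω` for all
`λ > 1`, or `λω ∈ ∂Ω` for all `λ > 1`. -/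
theorem ray_interior_or_frontier (Ω : Set (ℝ × ℝ)) (hΩ : PropI Ω) :
    (∀ ω ∈ interior Ω, ∀ c : ℝ, 1 < c → c • ω ∈ interior Ω) ∧
      (∀ ω ∈ frontier Ω,
        (∀ c : ℝ, 1 < c → c • ω ∈ interior Ω) ∨
          (∀ c : ℝ, 1 < c → c • ω ∈ frontier Ω)) := by
  obtain ⟨hne, hconv, hclosed, h0, hray⟩ := hΩ
  have key : ∀ ω ∈ interior Ω, ∀ c : ℝ, 1 < c → c • ω ∈ interior Ω := by
    intro ω hω c hc
    have hc0 : c ≠ 0 := by linarith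
    have hmem : c • ω ∈ c • interior Ω := ⟨ω, hω, rfl⟩
    rw [← interior_smul₀ hc0] at hmem
    exact interior_mono (hray c hc) hmem
  refine ⟨key, ?_⟩
  intro ω hω
  have hωΩ : ω ∈ Ω := hclosed.frontier_subset hω
  by_cases hP : ∃ c₀ : ℝ, 1 < c₀ ∧ c₀ • ω ∈ interior Ω
  · left
    obtain ⟨c₀, hc₀, hint⟩ := hP
    intro c hc
    rcases lt_trichotomy c c₀ with h | h | h
    · set t := (c - 1) / (c₀ - 1) with ht
      have ht0 : 0 < t := div_pos (by linarith) (by linarith)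
      have ht1 : t < 1 := (div_lt_one (by linarith)).2 (by linarith)
      have heq : c • ω = t • (c₀ • ω) + (1 - t) • ω := by
        rw [smul_smul, ← add_smul]
        congr 1
        have hd : c₀ - 1 ≠ 0 := sub_ne_zero.mpr (ne_of_gt hc₀)
        rw [ht]
        field_simp
        ring
      rw [heq]
      exact hconv.combo_interior_closure_mem_interior hint (subset_closure hωΩ)
        ht0 (by linarith) (by ring)
    · rw [h]; exact hint
    · have hc₀0 : (0:ℝ) < c₀ := by linarith
      have := key _ hint (c / c₀) ((one_lt_div hc₀0).2 h)
      rwa [smul_smul, div_mul_cancel₀ _ (ne_of_gt hc₀0)] at this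
  · right
    push_neg at hP
    intro c hc
    rw [hclosed.frontier_eq]
    exact ⟨hray c hc ⟨ω, hωΩ, rfl⟩, hP c hc⟩
end

section
/- Let Ω ⊆ ℝ² satisfy properties (i) and (**). Then for every (p,q) ∈ Ω^◇ the line L(p,q) = {(x,y) : px − qy = 1} is not parallel to either boundary ray of the cone C = closure(ℝ₊Ω): if e = (e₁,e₂) is a direction vector of a boundary ray of C, then p e₁ − q e₂ ≠ 0. This holds also in the degenerate case when the two boundary rays coincide (i.e., when Ω lies on a single ray from the origin). -/
open scoped Pointwise

/-- If `Ω` satisfies (i) and (**), then for every `(p,q) ∈ Ω^◇` the line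
`L(p,q) = {p·x − q·y = 1}` (with direction vector `(q,p)`) is not parallel to
any boundary ray of `C = closure(ℝ₊Ω)`: for any direction `e = (e₁,e₂)` of a
boundary ray of `C` one has `p·e₁ − q·e₂ ≠ 0`.  This covers in particular the
degenerate case when the two boundary rays coincide. -/
theorem line_not_parallel_to_boundary_ray
    (Ω : Set (ℝ × ℝ)) (hΩ : PropI Ω) (hss : PropSS Ω) :
    ∀ pq ∈ antipolar Ω, ∀ e : ℝ × ℝ, IsBoundaryRayDir (posCone Ω) e →
      pq.1 * e.1 - pq.2 * e.2 ≠ 0 := by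
  intro pq hpq e he h0
  set ε : ℝ := 1 / (|pq.1| + |pq.2| + 1) with hε
  have hεpos : 0 < ε := by positivity
  obtain ⟨t, ht, b, hb, hdist⟩ := hss e he ε hεpos
  have hb1 : 1 ≤ pq.1 * b.1 - pq.2 * b.2 := hpq b hb
  rw [Prod.dist_eq] at hdist
  have h1 : |t * e.1 - b.1| < ε := by
    have := le_max_left (dist (t • e).1 b.1) (dist (t • e).2 b.2)
    simp only [Prod.smul_fst, smul_eq_mul, Real.dist_eq] at this
    linarith [lt_of_le_of_lt this hdist]
  have h2 : |t * e.2 - b.2| < ε := by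
    have := le_max_right (dist (t • e).1 b.1) (dist (t • e).2 b.2)
    simp only [Prod.smul_snd, smul_eq_mul, Real.dist_eq] at this
    linarith [lt_of_le_of_lt this hdist]
  have key : pq.1 * b.1 - pq.2 * b.2
      = pq.1 * (b.1 - t * e.1) - pq.2 * (b.2 - t * e.2)
        + t * (pq.1 * e.1 - pq.2 * e.2) := by ring
  rw [h0, mul_zero, add_zero] at key
  have hbd : pq.1 * (b.1 - t * e.1) - pq.2 * (b.2 - t * e.2)
      ≤ |pq.1| * ε + |pq.2| * ε := by
    have e1 : |b.1 - t * e.1| ≤ ε := by rw [abs_sub_comm]; linarith [h1]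
    have e2 : |b.2 - t * e.2| ≤ ε := by rw [abs_sub_comm]; linarith [h2]
    have := abs_mul pq.1 (b.1 - t * e.1)
    have := abs_mul pq.2 (b.2 - t * e.2)
    nlinarith [le_abs_self (pq.1 * (b.1 - t * e.1)),
      neg_abs_le (pq.2 * (b.2 - t * e.2)),
      abs_nonneg pq.1, abs_nonneg pq.2,
      mul_le_mul_of_nonneg_left e1 (abs_nonneg pq.1),
      mul_le_mul_of_nonneg_left e2 (abs_nonneg pq.2)]
  have hlt : |pq.1| * ε + |pq.2| * ε < 1 := by
    have hpos : (0:ℝ) < |pq.1| + |pq.2| + 1 := by positivity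
    have heq : |pq.1| * ε + |pq.2| * ε
        = (|pq.1| + |pq.2|) / (|pq.1| + |pq.2| + 1) := by
      rw [hε]; field_simp
    rw [heq, div_lt_one hpos]; linarith
  linarith [key ▸ hb1, hbd]
end

section
/- Let Ω ⊆ ℝ² satisfy property (i) but fail property (**). Then there exists (p,q) ∈ Ω^◇ such that the line L(p,q) = {(x,y) : px − qy = 1} is parallel to a boundary ray of the cone C = closure(ℝ₊Ω), i.e., there is a direction vector e = (e₁,e₂) of a boundary ray of C with p e₁ − q e₂ = 0. -/
open scoped Pointwise

/-- If `Ω` satisfies (i) but fails (**), then some `(p,q) ∈ Ω^◇` determines a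
line `L(p,q) = {p·x − q·y = 1}` parallel to a boundary ray of the cone
`C = closure(ℝ₊Ω)`: there is a direction `e = (e₁,e₂)` of a boundary ray of
`C` with `p·e₁ − q·e₂ = 0`. -/
theorem exists_line_parallel_of_not_propSS
    (Ω : Set (ℝ × ℝ)) (hΩ : PropI Ω) (hnss : ¬ PropSS Ω) :
    ∃ pq ∈ antipolar Ω, ∃ e : ℝ × ℝ, IsBoundaryRayDir (posCone Ω) e ∧
      pq.1 * e.1 - pq.2 * e.2 = 0 := by
  obtain ⟨hne, hconv, hcl, h0, hray⟩ := hΩ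
  -- unpack the failure of (**)
  rw [PropSS] at hnss
  push_neg at hnss
  obtain ⟨e, hbdry, ε, hε, hfar⟩ := hnss
  -- the ray and the thickened Ω
  set R : Set (ℝ × ℝ) := {x | ∃ t : ℝ, 0 ≤ t ∧ x = t • e} with hR
  have hRconv : Convex ℝ R := by
    rintro x ⟨t₁, ht₁, rfl⟩ y ⟨t₂, ht₂, rfl⟩ a b ha hb _
    exact ⟨a * t₁ + b * t₂, add_nonneg (mul_nonneg ha ht₁) (mul_nonneg hb ht₂), by
      rw [add_smul, mul_smul, mul_smul]⟩
  set S : Set (ℝ × ℝ) := Ω + Metric.ball 0 (ε / 2) with hS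
  have hSopen : IsOpen S := IsOpen.add_left Metric.isOpen_ball
  have hSconv : Convex ℝ S := hconv.add (convex_ball 0 (ε / 2))
  have hdisj : Disjoint S R := by
    rw [Set.disjoint_left]
    rintro x hx ⟨t, ht, rfl⟩
    obtain ⟨ω, hω, v, hv, hsum⟩ := hx
    have hsum' : ω + v = t • e := hsum
    have hd : dist (t • e) ω < ε := by
      have h1 : t • e - ω = v := by rw [← hsum', add_sub_cancel_left]
      rw [dist_eq_norm, h1]
      have := mem_ball_zero_iff.mp hv
      linarith
    exact absurd hd (not_lt.mpr (hfar t ht ω hω))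
  obtain ⟨f, u, hfu, huf⟩ := geometric_hahn_banach_open hSconv hSopen hRconv hdisj
  -- g = -f is nonnegative multiple separation
  have hu0 : u ≤ 0 := by
    simpa using huf 0 ⟨0, le_refl 0, by simp⟩
  obtain ⟨a, ha⟩ := hne
  have haS : a ∈ S := ⟨a, ha, 0, by simpa using half_pos hε, by simp⟩
  have hfa : f a < u := hfu a haS
  have hga : 0 < -f a := by linarith
  have hane : a ≠ 0 := by
    rintro rfl
    simp at hga
  have hna : (0:ℝ) < ‖a‖ := norm_pos_iff.mpr hane
  -- the shift v₀
  set c : ℝ := ε / 4 / ‖a‖ with hc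
  have hcpos : 0 < c := by positivity
  set δ : ℝ := -u + c * (-f a) with hδ
  have hδpos : 0 < δ := by
    have : 0 < c * (-f a) := mul_pos hcpos hga
    linarith
  -- lower bound of -f on Ω
  have hlow : ∀ ω ∈ Ω, δ ≤ -f ω := by
    intro ω hω
    have hv : (-c) • a ∈ Metric.ball (0 : ℝ × ℝ) (ε / 2) := by
      rw [mem_ball_zero_iff, norm_smul]
      have : ‖(-c : ℝ)‖ = c := by
        rw [norm_neg, Real.norm_eq_abs, abs_of_pos hcpos]
      rw [this, hc]
      rw [div_mul_cancel₀ _ (ne_of_gt hna)]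
      linarith
    have hmem : ω + (-c) • a ∈ S := ⟨ω, hω, (-c) • a, hv, rfl⟩
    have := hfu _ hmem
    rw [map_add, map_smul] at this
    simp only [smul_eq_mul] at this
    nlinarith
  -- f is ≤ 0 on the cone ... -f ≥ 0 on posCone
  have hcone : ∀ x ∈ posCone Ω, 0 ≤ -f x := by
    have hsub : {x : ℝ × ℝ | ∃ t : ℝ, 0 ≤ t ∧ ∃ ω ∈ Ω, x = t • ω} ⊆
        {x : ℝ × ℝ | 0 ≤ -f x} := by
      rintro x ⟨t, ht, ω, hω, rfl⟩
      simp only [Set.mem_setOf_eq, map_smul, smul_eq_mul]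
      have := hlow ω hω
      nlinarith
    have hclset : IsClosed {x : ℝ × ℝ | 0 ≤ -f x} :=
      isClosed_le continuous_const (continuous_neg.comp f.continuous)
    intro x hx
    exact closure_minimal hsub hclset hx
  -- e ∈ posCone Ω
  have heC : e ∈ posCone Ω := by
    have := (hbdry.2 1 zero_le_one)
    rw [one_smul] at this
    have hfr : frontier (posCone Ω) ⊆ posCone Ω := by
      rw [posCone]
      exact frontier_subset_closure.trans (by rw [closure_closure])
    exact hfr this
  -- f e ≥ 0 from the ray side: u ≤ f (t • e) for all t ≥ 0
  have hfe_nonneg : 0 ≤ f e := by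
    by_contra h
    push_neg at h
    have hne' : f e ≠ 0 := ne_of_lt h
    have ht : (0:ℝ) ≤ (u - 1) / f e := by
      rw [div_nonneg_iff]; right; exact ⟨by linarith, le_of_lt h⟩
    have h1 := huf (((u - 1) / f e) • e) ⟨_, ht, rfl⟩
    rw [map_smul, smul_eq_mul, div_mul_cancel₀ _ hne'] at h1
    linarith
  have hfe0 : f e = 0 := by
    have := hcone e heC
    linarith
  -- build pq
  refine ⟨(-f (1, 0) / δ, f (0, 1) / δ), ?_, e, hbdry, ?_⟩
  · intro xy hxy
    have hdecomp : f xy = xy.1 * f (1, 0) + xy.2 * f (0, 1) := by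
      have : xy = xy.1 • ((1:ℝ), (0:ℝ)) + xy.2 • ((0:ℝ), (1:ℝ)) := by
        ext <;> simp
      rw [this, map_add, map_smul, map_smul, smul_eq_mul, smul_eq_mul]
      rw [← this]
    have := hlow xy hxy
    have key : -f (1, 0) / δ * xy.1 - f (0, 1) / δ * xy.2 = (-f xy) / δ := by
      rw [hdecomp]; ring
    rw [key, le_div_iff₀ hδpos, one_mul]
    linarith
  · have hdecomp : f e = e.1 * f (1, 0) + e.2 * f (0, 1) := by
      have : e = e.1 • ((1:ℝ), (0:ℝ)) + e.2 • ((0:ℝ), (1:ℝ)) := by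
        ext <;> simp
      rw [this, map_add, map_smul, map_smul, smul_eq_mul, smul_eq_mul]
      rw [← this]
    have key : -f (1, 0) / δ * e.1 - f (0, 1) / δ * e.2 = (-f e) / δ := by
      rw [hdecomp]; ring
    simp only [key, hfe0]
    simp
end

section
/- Let e₀ ∈ ℝ² be a unit vector, let l₀ = {λe₀ : λ ≥ 0}, let Ω ⊆ ℝ² be a closed set with dist(l₀, Ω) > 0, let d ∈ ℝ² be a fixed point, and let (ω_k) be a sequence in Ω such that ω_k/‖ω_k‖ → e₀. Then ‖ω_k‖ → ∞ and the angle α_k between the vector ω_k − d and the direction e₀ tends to 0 (equivalently, ⟨e₀, (ω_k − d)/‖ω_k − d‖⟩ → 1). -/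
/-!
Writing `ω = ‖ω‖ • normalize ω`, the distance from `ω` to the point `‖ω‖ • e₀` of the ray is
`‖ω‖ * dist e₀ (normalize ω)`. It is at least `ε`, while the second factor tends to `0`, so the
first tends to infinity. Then `‖ω‖⁻¹ • (ω - d) → e₀`, and normalizing (continuous at `e₀ ≠ 0`,
invariant under positive scaling) gives `normalize (ω - d) → e₀`.
-/

open Filter Topology

namespace NormedSpace

variable {V : Type*} [NormedAddCommGroup V] [NormedSpace ℝ V]

theorem dist_norm_smul_self_eq (u x : V) : dist (‖x‖ • u) x = ‖x‖ * dist u (normalize x) := by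
  have h := dist_smul₀ ‖x‖ u (normalize x)
  rwa [norm_smul_normalize, norm_norm] at h

theorem continuousAt_normalize {u : V} (hu : u ≠ 0) : ContinuousAt normalize u :=
  (continuous_norm.continuousAt.inv₀ (norm_ne_zero_iff.2 hu)).smul continuousAt_id

variable {ι : Type*} {l : Filter ι} {x : ι → V} {u : V}

theorem tendsto_norm_atTop_of_tendsto_normalize {ε : ℝ} (hε : 0 < ε)
    (hray : ∀ t : ℝ, 0 ≤ t → ∀ i, ε ≤ dist (t • u) (x i))
    (hx : Tendsto (fun i => normalize (x i)) l (𝓝 u)) : Tendsto (fun i => ‖x i‖) l atTop := by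
  set δ := fun i => dist u (normalize (x i))
  have hkey (i : ι) : ε ≤ ‖x i‖ * δ i :=
    dist_norm_smul_self_eq u (x i) ▸ hray _ (norm_nonneg _) i
  have hδpos (i : ι) : 0 < δ i := pos_of_mul_pos_right (hε.trans_le (hkey i)) (norm_nonneg _)
  have hδ : Tendsto δ l (𝓝[>] 0) := by
    refine tendsto_nhdsWithin_iff.2 ⟨?_, .of_forall hδpos⟩
    simpa using (tendsto_const_nhds (x := u)).dist hx
  refine tendsto_atTop_mono (fun i => ?_) ((tendsto_inv_nhdsGT_zero.comp hδ).const_mul_atTop hε)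
  exact (div_le_iff₀ (hδpos i)).2 (hkey i)

theorem tendsto_normalize_sub_of_tendsto_norm_atTop (d : V) (hu : u ≠ 0)
    (hnorm : Tendsto (fun i => ‖x i‖) l atTop)
    (hx : Tendsto (fun i => normalize (x i)) l (𝓝 u)) :
    Tendsto (fun i => normalize (x i - d)) l (𝓝 (normalize u)) := by
  have hscaled : Tendsto (fun i => ‖x i‖⁻¹ • (x i - d)) l (𝓝 u) := by
    simpa only [normalize, smul_sub, Pi.inv_apply, zero_smul, sub_zero] using
      hx.sub (hnorm.inv_tendsto_atTop.smul_const d)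
  refine ((continuousAt_normalize hu).tendsto.comp hscaled).congr' ?_
  filter_upwards [hnorm.eventually_gt_atTop 0] with i hi
  exact normalize_smul_of_pos (inv_pos.2 hi) _

end NormedSpace

open NormedSpace in
theorem norm_tendsto_atTop_and_angle_tendsto_zero_general
    (e₀ d : EuclideanSpace ℝ (Fin 2)) (he₀ : ‖e₀‖ = 1)
    (Ω : Set (EuclideanSpace ℝ (Fin 2)))
    (hdist : ∃ ε : ℝ, 0 < ε ∧ ∀ t : ℝ, 0 ≤ t → ∀ b ∈ Ω, ε ≤ dist (t • e₀) b)
    (ω : ℕ → EuclideanSpace ℝ (Fin 2)) (hω : ∀ k, ω k ∈ Ω)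
    (hconv : Tendsto (fun k => ‖ω k‖⁻¹ • ω k) atTop (𝓝 e₀)) :
    Tendsto (fun k => ‖ω k‖) atTop atTop ∧
      Tendsto (fun k => (inner ℝ e₀ (‖ω k - d‖⁻¹ • (ω k - d)) : ℝ))
        atTop (𝓝 1) := by
  obtain ⟨ε, hε, hray⟩ := hdist
  have hnorm := tendsto_norm_atTop_of_tendsto_normalize hε (fun t ht k => hray t ht _ (hω k)) hconv
  refine ⟨hnorm, ?_⟩
  have hdir := tendsto_normalize_sub_of_tendsto_norm_atTop d
    (norm_ne_zero_iff.1 (he₀ ▸ one_ne_zero)) hnorm hconv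
  rw [normalize_eq_self_of_norm_eq_one he₀] at hdir
  have hinner := (tendsto_const_nhds (x := e₀)).inner (𝕜 := ℝ) hdir
  rwa [real_inner_self_eq_norm_sq, he₀, one_pow] at hinner

/-- Let `e₀` be a unit vector in the Euclidean plane, `l₀ = ℝ₊e₀`, let `Ω` be a
closed set with `dist(l₀, Ω) > 0`, let `d` be a fixed point, and let `(ω_k)` be
a sequence in `Ω` with `ω_k/‖ω_k‖ → e₀`.  Then `‖ω_k‖ → ∞` and the angle `α_k`
between `ω_k − d` and `e₀` tends to `0`, i.e.
`⟨e₀, (ω_k − d)/‖ω_k − d‖⟩ → 1`. -/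
theorem norm_tendsto_atTop_and_angle_tendsto_zero
    (e₀ d : EuclideanSpace ℝ (Fin 2)) (he₀ : ‖e₀‖ = 1)
    (Ω : Set (EuclideanSpace ℝ (Fin 2))) (hΩcl : IsClosed Ω)
    (hdist : ∃ ε : ℝ, 0 < ε ∧ ∀ t : ℝ, 0 ≤ t → ∀ b ∈ Ω, ε ≤ dist (t • e₀) b)
    (ω : ℕ → EuclideanSpace ℝ (Fin 2)) (hω : ∀ k, ω k ∈ Ω)
    (hconv : Tendsto (fun k => ‖ω k‖⁻¹ • ω k) atTop (𝓝 e₀)) :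
    Tendsto (fun k => ‖ω k‖) atTop atTop ∧
      Tendsto (fun k => (inner ℝ e₀ (‖ω k - d‖⁻¹ • (ω k - d)) : ℝ))
        atTop (𝓝 1) :=
  norm_tendsto_atTop_and_angle_tendsto_zero_general e₀ d he₀ Ω hdist ω hω hconv
end

section
/- Let Ω ⊆ ℝ² be a convex compact set with 0 in its interior and let σ_Ω(h) = max_{v ∈ Ω} (h₁v₁ + h₂v₂) be its support function. Let h = (h₁,h₂) : [0,T] → ℝ² be Lipschitz, let h₃ ∈ ℝ be a constant, and let w : [0,T] → Ω and f : [0,T] → [0,∞) be measurable such that for almost every t: ḣ₁(t) = −h₃ f(t) w₂(t), ḣ₂(t) = h₃ f(t) w₁(t), and w(t) ∈ argmax_{v ∈ Ω} (h₁(t)v₁ + h₂(t)v₂). Then the function t ↦ σ_Ω(h₁(t), h₂(t)) is constant on [0,T]. (This is the first-integral claim A = μ_{Ω°}(h₁,h₂) = const for the vertical subsystem of the Pontryagin Maximum Principle in the Finsler problem on the Heisenberg group, since the support function of Ω equals the Minkowski gauge of the polar set Ω°.) -/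
/-!
Along the extremal, `σ_Ω(h(t)) ≥ ⟨h(t), w(s)⟩` for all `t`, with equality at `t = s`. Where both
sides are differentiable the derivatives therefore agree at `s` (envelope theorem), so
`d/dt σ_Ω(h(t)) = ⟨ḣ(t), w(t)⟩ = h₃ f(t) (−w₂ w₁ + w₁ w₂) = 0` for a.e. `t`. Since `σ_Ω` is
Lipschitz for bounded `Ω`, `t ↦ σ_Ω(h(t))` is Lipschitz, hence absolutely continuous, and an
absolutely continuous function with a.e. vanishing derivative is constant.
-/

open MeasureTheory Set Filter Bornology

noncomputable def supportFun (Ω : Set (ℝ × ℝ)) (p : ℝ × ℝ) : ℝ :=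
  sSup {r : ℝ | ∃ v ∈ Ω, r = p.1 * v.1 + p.2 * v.2}

theorem HasDerivAt.eq_of_eventually_le_of_eq {f g : ℝ → ℝ} {f' g' x : ℝ}
    (hf : HasDerivAt f f' x) (hg : HasDerivAt g g' x) (hle : ∀ᶠ y in nhds x, f y ≤ g y)
    (hx : f x = g x) : f' = g' := by
  have hmin : IsLocalMin (fun y => g y - f y) x :=
    hle.mono fun y hy => by simpa [hx] using hy
  linarith [hmin.hasDerivAt_eq_zero (hg.sub hf)]

lemma abs_pairing_le (p v : ℝ × ℝ) : |p.1 * v.1 + p.2 * v.2| ≤ 2 * ‖p‖ * ‖v‖ :=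
  calc |p.1 * v.1 + p.2 * v.2| ≤ |p.1| * |v.1| + |p.2| * |v.2| := by
        rw [← abs_mul, ← abs_mul]; exact abs_add_le _ _
    _ ≤ ‖p‖ * ‖v‖ + ‖p‖ * ‖v‖ := by
        gcongr
        exacts [norm_fst_le p, norm_fst_le v, norm_snd_le p, norm_snd_le v]
    _ = 2 * ‖p‖ * ‖v‖ := by ring

section SupportFunction

variable {Ω : Set (ℝ × ℝ)}

lemma bddAbove_pairing (hΩ : IsBounded Ω) (p : ℝ × ℝ) :
    BddAbove {r : ℝ | ∃ v ∈ Ω, r = p.1 * v.1 + p.2 * v.2} := by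
  obtain ⟨R, hR⟩ := hΩ.exists_norm_le
  refine ⟨2 * ‖p‖ * R, ?_⟩
  rintro _ ⟨v, hv, rfl⟩
  calc p.1 * v.1 + p.2 * v.2 ≤ 2 * ‖p‖ * ‖v‖ := (le_abs_self _).trans (abs_pairing_le p v)
    _ ≤ 2 * ‖p‖ * R := by gcongr; exact hR v hv

lemma pairing_le_supportFun (hΩ : IsBounded Ω) {v : ℝ × ℝ} (hv : v ∈ Ω) (p : ℝ × ℝ) :
    p.1 * v.1 + p.2 * v.2 ≤ supportFun Ω p :=
  le_csSup (bddAbove_pairing hΩ p) ⟨v, hv, rfl⟩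

lemma supportFun_eq_pairing {p v : ℝ × ℝ} (hv : v ∈ Ω)
    (hmax : ∀ u ∈ Ω, p.1 * u.1 + p.2 * u.2 ≤ p.1 * v.1 + p.2 * v.2) :
    supportFun Ω p = p.1 * v.1 + p.2 * v.2 :=
  IsGreatest.csSup_eq ⟨⟨v, hv, rfl⟩, by rintro _ ⟨u, hu, rfl⟩; exact hmax u hu⟩

lemma exists_lipschitzWith_supportFun (hΩ : IsBounded Ω) :
    ∃ K, LipschitzWith K (supportFun Ω) := by
  obtain ⟨R, hR0, hR⟩ := hΩ.exists_pos_norm_le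
  refine ⟨(2 * R).toNNReal, LipschitzWith.of_le_add_mul' _ fun p q => ?_⟩
  rcases Ω.eq_empty_or_nonempty with rfl | ⟨v₀, hv₀⟩
  · simp only [supportFun, mem_empty_iff_false, false_and, exists_false, ofPred_false,
      Real.sSup_empty, zero_add]
    positivity
  refine csSup_le ⟨_, v₀, hv₀, rfl⟩ ?_
  rintro _ ⟨v, hv, rfl⟩
  have hq := pairing_le_supportFun hΩ hv q
  have hpq := (le_abs_self _).trans (abs_pairing_le (p - q) v)
  have hv' : 2 * ‖p - q‖ * ‖v‖ ≤ 2 * R * ‖p - q‖ := by nlinarith [hR v hv, norm_nonneg (p - q)]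
  simp only [Prod.fst_sub, Prod.snd_sub] at hpq
  rw [dist_eq_norm]
  linarith

lemma hasDerivAt_supportFun_comp (hΩ : IsBounded Ω) {h₁ h₂ : ℝ → ℝ} {a b t : ℝ}
    {v : ℝ × ℝ} (hv : v ∈ Ω)
    (hmax : ∀ u ∈ Ω, h₁ t * u.1 + h₂ t * u.2 ≤ h₁ t * v.1 + h₂ t * v.2)
    (hd₁ : HasDerivAt h₁ a t) (hd₂ : HasDerivAt h₂ b t)
    (hdiff : DifferentiableAt ℝ (fun x => supportFun Ω (h₁ x, h₂ x)) t) :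
    HasDerivAt (fun x => supportFun Ω (h₁ x, h₂ x)) (a * v.1 + b * v.2) t := by
  have hpairing : HasDerivAt (fun x => h₁ x * v.1 + h₂ x * v.2) (a * v.1 + b * v.2) t :=
    (hd₁.mul_const v.1).add (hd₂.mul_const v.2)
  refine hdiff.hasDerivAt.congr_deriv (hpairing.eq_of_eventually_le_of_eq hdiff.hasDerivAt
    (Eventually.of_forall fun x => pairing_le_supportFun hΩ hv (h₁ x, h₂ x))
    (supportFun_eq_pairing (p := (h₁ t, h₂ t)) hv hmax).symm).symm

end SupportFunction

theorem support_function_first_integral_general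
    (Ω : Set (ℝ × ℝ)) (hcomp : IsCompact Ω)
    (T : ℝ) (hT : 0 < T) (K : NNReal)
    (h₁ h₂ : ℝ → ℝ)
    (hLip1 : LipschitzOnWith K h₁ (Set.Icc 0 T))
    (hLip2 : LipschitzOnWith K h₂ (Set.Icc 0 T))
    (h₃ : ℝ)
    (w : ℝ → ℝ × ℝ) (f : ℝ → ℝ)
    (hwΩ : ∀ t ∈ Set.Icc (0 : ℝ) T, w t ∈ Ω)
    (hder : ∀ᵐ t ∂(volume.restrict (Set.Icc (0 : ℝ) T)),
      HasDerivAt h₁ (-(h₃ * f t * (w t).2)) t ∧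
        HasDerivAt h₂ (h₃ * f t * (w t).1) t)
    (hmax : ∀ᵐ t ∂(volume.restrict (Set.Icc (0 : ℝ) T)),
      ∀ v ∈ Ω, h₁ t * v.1 + h₂ t * v.2 ≤ h₁ t * (w t).1 + h₂ t * (w t).2) :
    ∀ s ∈ Set.Icc (0 : ℝ) T, ∀ t ∈ Set.Icc (0 : ℝ) T,
      sSup {r : ℝ | ∃ v ∈ Ω, r = h₁ s * v.1 + h₂ s * v.2} =
        sSup {r : ℝ | ∃ v ∈ Ω, r = h₁ t * v.1 + h₂ t * v.2} := by
  set G : ℝ → ℝ := fun t => supportFun Ω (h₁ t, h₂ t)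
  have hIcc : uIcc 0 T = Icc 0 T := uIcc_of_le hT.le
  obtain ⟨L, hL⟩ := exists_lipschitzWith_supportFun hcomp.isBounded
  have hac : AbsolutelyContinuousOnInterval G 0 T := by
    refine LipschitzOnWith.absolutelyContinuousOnInterval (K := L * max K K) ?_
    rw [hIcc]
    exact hL.comp_lipschitzOnWith (hLip1.prodMk hLip2)
  have hG' : ∀ᵐ t, t ∈ uIcc 0 T → HasDerivAt G 0 t := by
    rw [hIcc]
    filter_upwards [(ae_restrict_iff' measurableSet_Icc).1 hder,
      (ae_restrict_iff' measurableSet_Icc).1 hmax, hIcc ▸ hac.ae_differentiableAt]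
      with t hd hm hdiff ht
    convert hasDerivAt_supportFun_comp hcomp.isBounded (hwΩ t ht) (hm ht) (hd ht).1 (hd ht).2
      (hdiff ht) using 1
    ring
  obtain ⟨C, hC⟩ := hac.const_of_ae_hasDerivAt_zero hG'
  intro s hs t ht
  exact (hC s (hIcc ▸ hs)).trans (hC t (hIcc ▸ ht)).symm

/-- First integral of the vertical subsystem of PMP for the Finsler problem on
the Heisenberg group: if `Ω ⊆ ℝ²` is convex compact with `0` in its interior,
`h = (h₁,h₂)` is Lipschitz on `[0,T]`, `h₃` is constant, and for a.e. `t` one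
has `ḣ₁ = −h₃ f w₂`, `ḣ₂ = h₃ f w₁` with `f ≥ 0` and
`w(t) ∈ argmax_{v ∈ Ω}(h₁v₁ + h₂v₂)`, then the support function
`σ_Ω(h₁(t), h₂(t)) = μ_{Ω°}(h₁(t), h₂(t))` is constant on `[0,T]`. -/
theorem support_function_first_integral
    (Ω : Set (ℝ × ℝ)) (hconv : Convex ℝ Ω) (hcomp : IsCompact Ω)
    (h0 : (0 : ℝ × ℝ) ∈ interior Ω)
    (T : ℝ) (hT : 0 < T) (K : NNReal)
    (h₁ h₂ : ℝ → ℝ)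
    (hLip1 : LipschitzOnWith K h₁ (Set.Icc 0 T))
    (hLip2 : LipschitzOnWith K h₂ (Set.Icc 0 T))
    (h₃ : ℝ)
    (w : ℝ → ℝ × ℝ) (f : ℝ → ℝ)
    (hw : Measurable w) (hf : Measurable f)
    (hf0 : ∀ t, 0 ≤ f t)
    (hwΩ : ∀ t ∈ Set.Icc (0 : ℝ) T, w t ∈ Ω)
    (hder : ∀ᵐ t ∂(volume.restrict (Set.Icc (0 : ℝ) T)),
      HasDerivAt h₁ (-(h₃ * f t * (w t).2)) t ∧
        HasDerivAt h₂ (h₃ * f t * (w t).1) t)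
    (hmax : ∀ᵐ t ∂(volume.restrict (Set.Icc (0 : ℝ) T)),
      ∀ v ∈ Ω, h₁ t * v.1 + h₂ t * v.2 ≤ h₁ t * (w t).1 + h₂ t * (w t).2) :
    ∀ s ∈ Set.Icc (0 : ℝ) T, ∀ t ∈ Set.Icc (0 : ℝ) T,
      sSup {r : ℝ | ∃ v ∈ Ω, r = h₁ s * v.1 + h₂ s * v.2} =
        sSup {r : ℝ | ∃ v ∈ Ω, r = h₁ t * v.1 + h₂ t * v.2} :=
  support_function_first_integral_general Ω hcomp T hT K h₁ h₂ hLip1 hLip2 h₃ w f hwΩ hder hmax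
end

section
/- Let α > 1 and β > 1 with 1/α + 1/β = 1, and let Ω_α = {(x,y) ∈ ℝ² : x > 0 and x^α − |y|^α ≥ 1}. Then the antipolar of Ω_α is Ω_β: Ω_α^◇ = {(p,q) ∈ ℝ² : p > 0 and p^β − |q|^β ≥ 1}. In particular, for α = 2, Ω_2^◇ = Ω_2. -/
/-- The `α`-hyperbola `Ω_α = {(x,y) : x > 0, x^α − |y|^α ≥ 1}` (real powers). -/
def alphaHyperbola (α : ℝ) : Set (ℝ × ℝ) :=
  {xy : ℝ × ℝ | 0 < xy.1 ∧ 1 ≤ xy.1 ^ α - |xy.2| ^ α}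

noncomputable def alphaHyperbolaBoundary (α y : ℝ) : ℝ := (1 + |y| ^ α) ^ α⁻¹

section

variable {α β : ℝ}

lemma one_le_alphaHyperbolaBoundary (hα : 0 < α) (y : ℝ) : 1 ≤ alphaHyperbolaBoundary α y :=
  Real.one_le_rpow (by simp only [le_add_iff_nonneg_right]; positivity) (inv_nonneg.2 hα.le)

lemma mem_alphaHyperbola_iff (hα : 0 < α) {xy : ℝ × ℝ} :
    xy ∈ alphaHyperbola α ↔ alphaHyperbolaBoundary α xy.2 ≤ xy.1 := by
  refine ⟨fun ⟨hx, h⟩ ↦ ?_, fun h ↦ ?_⟩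
  · exact (Real.rpow_inv_le_iff_of_pos (by positivity) hx.le hα).2 (by linarith)
  · have hx := (one_le_alphaHyperbolaBoundary hα xy.2).trans h
    have := (Real.rpow_inv_le_iff_of_pos (by positivity) (by linarith) hα).1 h
    exact ⟨by linarith, by linarith⟩

lemma one_add_mul_le_alphaHyperbolaBoundary_mul (h : α.HolderConjugate β) (y q : ℝ) :
    1 + y * q ≤ alphaHyperbolaBoundary α y * alphaHyperbolaBoundary β q := by
  simpa [alphaHyperbolaBoundary, Fin.sum_univ_two] using
    Real.inner_le_Lp_mul_Lq Finset.univ ![1, y] ![1, q] h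

lemma exists_alphaHyperbolaBoundary_mul_eq (h : α.HolderConjugate β) (q : ℝ) :
    ∃ y, alphaHyperbolaBoundary α y * alphaHyperbolaBoundary β q = 1 + y * q := by
  have hβ := h.symm.sub_one_pos
  have hq := abs_nonneg q
  have hpow_sub_one : |q| ^ (β - 1) = |q| ^ (β - 2) * |q| := by
    rw [← Real.rpow_add_one' hq (by linarith)]
    ring_nf
  set y := q * |q| ^ (β - 2)
  have hyq : y * q = |q| ^ β := calc
    y * q = |q| ^ (β - 2) * |q| * |q| := by rw [mul_assoc _ |q|, abs_mul_abs_self]; ring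
    _ = |q| ^ (β - 1 + 1) := by rw [Real.rpow_add_one' hq (by linarith), hpow_sub_one]
    _ = |q| ^ β := by ring_nf
  have hyα : |y| ^ α = |q| ^ β := by
    rw [abs_mul, abs_of_nonneg (Real.rpow_nonneg hq _), mul_comm, ← hpow_sub_one,
      ← Real.rpow_mul hq, h.symm.sub_one_mul_conj]
  refine ⟨y, ?_⟩
  rw [alphaHyperbolaBoundary, alphaHyperbolaBoundary, hyα, hyq, ← Real.rpow_add (by positivity),
    h.inv_add_inv_eq_one, Real.rpow_one]

theorem antipolar_alphaHyperbola_of_holderConjugate (h : α.HolderConjugate β) :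
    antipolar (alphaHyperbola α) = alphaHyperbola β := by
  ext ⟨p, q⟩
  rw [mem_alphaHyperbola_iff h.symm.pos]
  constructor
  · intro hpq
    obtain ⟨y, hy⟩ := exists_alphaHyperbolaBoundary_mul_eq h q
    have hpair := hpq (alphaHyperbolaBoundary α y, y) ((mem_alphaHyperbola_iff h.pos).2 le_rfl)
    refine le_of_mul_le_mul_left ?_ (zero_lt_one.trans_le (one_le_alphaHyperbolaBoundary h.pos y))
    dsimp only at hpair
    linarith
  · rintro hp ⟨x, y⟩ hxy
    rw [mem_alphaHyperbola_iff h.pos] at hxy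
    have hy := one_le_alphaHyperbolaBoundary h.pos y
    have hq := one_le_alphaHyperbolaBoundary h.symm.pos q
    have hholder : 1 + y * q ≤ x * p := calc
      1 + y * q ≤ alphaHyperbolaBoundary α y * alphaHyperbolaBoundary β q :=
        one_add_mul_le_alphaHyperbolaBoundary_mul h y q
      _ ≤ x * p := mul_le_mul hxy hp (by linarith) (by linarith)
    dsimp only
    linarith

end

/-- For conjugate exponents `α, β > 1` with `1/α + 1/β = 1`, the antipolar of
the `α`-hyperbola `Ω_α` is the `β`-hyperbola `Ω_β`; in particular
`Ω₂^◇ = Ω₂`. -/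
theorem antipolar_alphaHyperbola (α β : ℝ) (hα : 1 < α) (hβ : 1 < β)
    (hαβ : 1 / α + 1 / β = 1) :
    antipolar (alphaHyperbola α) = alphaHyperbola β ∧
      antipolar (alphaHyperbola 2) = alphaHyperbola 2 :=
  have h : α.HolderConjugate β :=
    { inv_add_inv_eq_inv := by simpa using hαβ
      left_pos := by linarith
      right_pos := by linarith }
  ⟨antipolar_alphaHyperbola_of_holderConjugate h,
    antipolar_alphaHyperbola_of_holderConjugate .two_two⟩
end
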